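/- arXiv:2211.07939 — 2 statements merged into one kernel-verified Lean document; each statement's English description precedes it below -/
import Mathlib

section
/- Let φ : X → X be a nonsingular, finitely non-mixing, bimeasurable bijection with φ^{-1}(𝒜) ⊆ 𝒜, and suppose T_u : L^p(Σ) → L^p(𝒜), T_u f = E^𝒜(u·(f∘φ)), is bounded and subspace-hypercyclic with respect to L^p(𝒜). Then for every F ∈ 𝒜 with 0 < μ(F) < ∞ there exist 𝒜-measurable sets V_k ⊆ F with μ(V_k) → μ(F) and an increasing sequence of positive integers (n_k) such that ‖(∏_{i=0}^{n_k-1} E^𝒜(u)∘φ^i)^{-1}‖_{L^∞(V_k)} → 0 and ‖(h^𝒜_{n_k})^{1/p} · [E^{φ^{-n_k}(𝒜)}(∏_{i=0}^{n_k-1} E^𝒜(u)∘φ^i)]∘φ^{-n_k}‖_{L^∞(V_k)} → 0 as k → ∞. -/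
set_option maxHeartbeats 2000000


open MeasureTheory Filter Set Topology ENNReal

noncomputable section

/-- A map `T` is *subspace-hypercyclic* with respect to a subset `M` if there exists a vector
whose orbit under `T` meets `M` in a set that is dense in `M`. -/
def SubspaceHypercyclic {E : Type*} [TopologicalSpace E] (T : E → E) (M : Set E) : Prop :=
  ∃ f : E, ∀ x ∈ M, x ∈ closure ((Set.range fun n : ℕ => T^[n] f) ∩ M)

namespace Stmt3Aux


lemma one_le_abs_cast_sub {a b : ℕ} (h : a ≠ b) : (1 : ℝ) ≤ |(a : ℝ) - (b : ℝ)| := by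
  have h1 : ((a : ℤ) : ℝ) - ((b : ℤ) : ℝ) = (((a : ℤ) - (b : ℤ) : ℤ) : ℝ) := by push_cast; ring
  have h2 : (1 : ℤ) ≤ |(a : ℤ) - (b : ℤ)| := Int.one_le_abs (by omega)
  calc (1 : ℝ) ≤ (|(a : ℤ) - (b : ℤ)| : ℤ) := by exact_mod_cast h2
  _ = |(((a : ℤ) - (b : ℤ) : ℤ) : ℝ)| := by rw [Int.cast_abs]
  _ = |(a : ℝ) - (b : ℝ)| := by push_cast; ring_nf

/-- Fresh point: if a whole segment `t • χ` lies inside the closure of `D`,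
we can find points of `D` near `χ` avoiding any given finite set. -/
lemma fresh_point {E : Type*} [NormedAddCommGroup E] [NormedSpace ℝ E]
    (D : Set E) (χ : E) (hχ : χ ≠ 0)
    (hcl : ∀ t : ℝ, (t • χ) ∈ closure D)
    (S : Finset E) {δ : ℝ} (hδ : 0 < δ) :
    ∃ d ∈ D, d ∉ S ∧ ‖d - χ‖ < δ := by
  classical
  set c := ‖χ‖ with hc
  have hc0 : 0 < c := norm_pos_iff.mpr hχ
  set n := S.card + 1 with hn
  set η := δ / (2 * c * (n + 1)) with hη
  have hη0 : 0 < η := by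
    apply div_pos hδ; positivity
  set t : Fin n → ℝ := fun i => 1 + ((i : ℕ) + 1) * η with ht
  have key : ∀ i : Fin n, ∃ d ∈ D, dist (t i • χ) d < η * c / 3 := fun i =>
    Metric.mem_closure_iff.mp (hcl (t i)) (η * c / 3) (by positivity)
  choose d hdD hdn using key
  have hdist : ∀ i j : Fin n, dist (t i • χ) (t j • χ) = |(((i : ℕ) : ℝ) - ((j : ℕ) : ℝ))| * η * c := by
    intro i j
    rw [dist_eq_norm, ← sub_smul, norm_smul]
    have : t i - t j = (((i : ℕ) : ℝ) - ((j : ℕ) : ℝ)) * η := by simp only [ht]; ring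
    rw [this, Real.norm_eq_abs, abs_mul, abs_of_nonneg hη0.le]
  have hinj : Function.Injective d := by
    intro i j hij
    by_contra hne
    have h3 : η * c ≤ dist (t i • χ) (t j • χ) := by
      rw [hdist i j]
      have h0 := one_le_abs_cast_sub (fun h : (i : ℕ) = (j : ℕ) => hne (Fin.ext h))
      calc η * c = 1 * (η * c) := by ring
      _ ≤ |((i:ℕ) : ℝ) - ((j:ℕ) : ℝ)| * (η * c) :=
          mul_le_mul_of_nonneg_right h0 (by positivity)
      _ = |((i:ℕ) : ℝ) - ((j:ℕ) : ℝ)| * η * c := by ring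
    have h4 : dist (t i • χ) (t j • χ) ≤ dist (t i • χ) (d i) + dist (t j • χ) (d j) := by
      rw [hij]
      calc dist (t i • χ) (t j • χ) ≤ dist (t i • χ) (d j) + dist (d j) (t j • χ) :=
        dist_triangle _ _ _
      _ = dist (t i • χ) (d j) + dist (t j • χ) (d j) := by rw [dist_comm (d j)]
    have h5 := hdn i
    have h6 := hdn j
    nlinarith [mul_pos hη0 hc0]
  have hbound : ∀ i : Fin n, ‖d i - χ‖ < δ := by
    intro i
    have h1 : dist (d i) χ ≤ dist (d i) (t i • χ) + dist (t i • χ) χ := dist_triangle _ _ _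
    have h2 : dist (t i • χ) χ = (((i : ℕ) : ℝ) + 1) * η * c := by
      have : t i • χ - χ = ((((i : ℕ) : ℝ) + 1) * η) • χ := by
        have h9 : t i • χ - χ = t i • χ - (1 : ℝ) • χ := by rw [one_smul]
        rw [h9, ← sub_smul]
        congr 1
        simp only [ht]; ring
      rw [dist_eq_norm, this, norm_smul, Real.norm_eq_abs,
        abs_of_nonneg (by positivity : (0:ℝ) ≤ (((i : ℕ) : ℝ) + 1) * η)]
    have h3 : (((i : ℕ) : ℝ) + 1) ≤ n := by
      have := i.2
      exact_mod_cast Nat.succ_le_of_lt this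
    have h4 : dist (d i) (t i • χ) < η * c / 3 := by rw [dist_comm]; exact hdn i
    have h5 : (((i : ℕ) : ℝ) + 1) * η * c ≤ (n : ℝ) * η * c := by
      apply mul_le_mul_of_nonneg_right (mul_le_mul_of_nonneg_right h3 hη0.le) hc0.le
    have hnc : (n : ℝ) * η * c + η * c / 3 < δ := by
      have hval : η * (2 * c * (n + 1)) = δ := by
        rw [hη]; field_simp
      nlinarith [mul_pos hη0 hc0, hc0, hη0]
    rw [← dist_eq_norm]
    calc dist (d i) χ ≤ dist (d i) (t i • χ) + dist (t i • χ) χ := h1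
    _ < η * c / 3 + (((i : ℕ) : ℝ) + 1) * η * c := by rw [h2]; linarith
    _ ≤ η * c / 3 + (n : ℝ) * η * c := by linarith
    _ < δ := by linarith
  by_contra hcon
  push_neg at hcon
  have hS : ∀ i : Fin n, d i ∈ S := by
    intro i
    by_contra hns
    exact absurd (hcon (d i) (hdD i) hns) (not_le.mpr (hbound i))
  have : Fintype.card (Fin n) ≤ Fintype.card S :=
    Fintype.card_le_of_injective (fun i => (⟨d i, hS i⟩ : {x // x ∈ S}))
      (fun i j hij => hinj (by simpa using congrArg Subtype.val hij))
  simp only [Fintype.card_fin, Fintype.card_coe] at this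
  omega



variable {X : Type*}

/-- Change of variables estimate via the Radon-Nikodym derivative of the trimmed
push-forward measure. -/
lemma transport {m m0 : MeasurableSpace X} (hm : m ≤ m0) (μ : Measure X)
    {τ : X → X} (hτ : Measurable τ)
    {W : Set X} (hW : MeasurableSet[m] W) {G : X → ℝ≥0∞} (hG : Measurable[m] G) :
    ∫⁻ x in W, ((μ.map τ).trim hm).rnDeriv (μ.trim hm) x * G x ∂μ
      ≤ ∫⁻ x in τ ⁻¹' W, G (τ x) ∂μ := by
  set D : X → ℝ≥0∞ := ((μ.map τ).trim hm).rnDeriv (μ.trim hm) with hD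
  have hDm : Measurable[m] D := Measure.measurable_rnDeriv _ _
  have hGind : Measurable[m] (W.indicator G) := hG.indicator hW
  calc ∫⁻ x in W, D x * G x ∂μ
      = ∫⁻ x, W.indicator (fun x => D x * G x) x ∂μ := by
        rw [lintegral_indicator (hm _ hW) _]
    _ = ∫⁻ x, D x * W.indicator G x ∂μ := by
        congr 1; funext x
        by_cases hx : x ∈ W
        · simp [Set.indicator_of_mem hx]
        · simp [Set.indicator_of_notMem hx]
    _ = ∫⁻ x, D x * W.indicator G x ∂(μ.trim hm) := by
        rw [lintegral_trim hm (f := fun x => D x * W.indicator G x) (hDm.mul hGind)]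
    _ = ∫⁻ x, W.indicator G x ∂((μ.trim hm).withDensity D) := by
        rw [lintegral_withDensity_eq_lintegral_mul _ hDm hGind]; rfl
    _ ≤ ∫⁻ x, W.indicator G x ∂((μ.map τ).trim hm) :=
        lintegral_mono' (Measure.withDensity_rnDeriv_le _ _) le_rfl
    _ = ∫⁻ x, W.indicator G x ∂(μ.map τ) := lintegral_trim hm hGind
    _ = ∫⁻ x, W.indicator G (τ x) ∂μ :=
        lintegral_map (hGind.mono hm le_rfl) hτ
    _ = ∫⁻ x, (τ ⁻¹' W).indicator (fun x => G (τ x)) x ∂μ := by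
        apply lintegral_congr
        intro x
        by_cases hx : τ x ∈ W
        · rw [Set.indicator_of_mem hx, Set.indicator_of_mem (show x ∈ τ ⁻¹' W from hx)]
        · rw [Set.indicator_of_notMem hx, Set.indicator_of_notMem (show x ∉ τ ⁻¹' W from hx)]
    _ = ∫⁻ x in τ ⁻¹' W, G (τ x) ∂μ := lintegral_indicator (hτ (hm _ hW)) _

/-- If an `m`-measurable set is null for the push-forward measure, then the
Radon-Nikodym derivative of the trimmed push-forward vanishes a.e. on it. -/
lemma rnDeriv_zero_on_null {m m0 : MeasurableSpace X} (hm : m ≤ m0) (μ : Measure X)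
    (ν : Measure X) {A : Set X} (hA : MeasurableSet[m] A) (hνA : ν A = 0) :
    ∀ᵐ x ∂μ, x ∈ A → (ν.trim hm).rnDeriv (μ.trim hm) x = 0 := by
  set D : X → ℝ≥0∞ := (ν.trim hm).rnDeriv (μ.trim hm) with hD
  have hDm : Measurable[m] D := Measure.measurable_rnDeriv _ _
  have h1 : ∫⁻ x in A, D x ∂μ = 0 := by
    have h2 : ∫⁻ x in A, D x ∂μ = ∫⁻ x, A.indicator D x ∂μ :=
      (lintegral_indicator (hm _ hA) _).symm
    have h3 : ∫⁻ x, A.indicator D x ∂μ = ∫⁻ x, A.indicator D x ∂(μ.trim hm) :=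
      (lintegral_trim hm (hDm.indicator hA)).symm
    have h4 : ∫⁻ x, A.indicator D x ∂(μ.trim hm) = ∫⁻ x in A, D x ∂(μ.trim hm) :=
      lintegral_indicator hA _
    have h5 : ∫⁻ x in A, D x ∂(μ.trim hm) = ((μ.trim hm).withDensity D) A :=
      (withDensity_apply _ hA).symm
    have h6 : ((μ.trim hm).withDensity D) A ≤ (ν.trim hm) A :=
      Measure.withDensity_rnDeriv_le _ _ A
    have h7 : (ν.trim hm) A = ν A := trim_measurableSet_eq hm hA
    rw [h2, h3, h4, h5]
    exact le_antisymm (by rw [← hνA, ← h7]; exact h6) (zero_le)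
  have h8 : D =ᵐ[μ.restrict A] 0 := (lintegral_eq_zero_iff (hDm.mono hm le_rfl)).mp h1
  have h9 : ∀ᵐ x ∂(μ.restrict A), D x = 0 := by
    filter_upwards [h8] with x hx; simpa using hx
  rw [ae_restrict_iff' (hm _ hA)] at h9
  exact h9



variable {X : Type*}

/-- `L^p` contraction property of the conditional expectation, in `lintegral` form,
localized to an `m'`-measurable set. -/
lemma lintegral_rpow_condexp_le {m' m0 : MeasurableSpace X} (hm' : m' ≤ m0) (μ : Measure X)
    [SigmaFinite (μ.trim hm')] {g : X → ℝ} (hg : Integrable g μ) (hgm : Measurable g)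
    {R : Set X} (hR : MeasurableSet[m'] R) {p' : ℝ} (hp' : 1 ≤ p') :
    ∫⁻ x in R, ENNReal.ofReal (|(μ[g|m']) x| ^ p') ∂μ
      ≤ ∫⁻ x in R, ENNReal.ofReal (|g x| ^ p') ∂μ := by
  have hp'0 : (0 : ℝ) < p' := lt_of_lt_of_le zero_lt_one hp'
  set ce : X → ℝ := μ[(fun x => |g x|)|m'] with hce
  have hceSM : StronglyMeasurable[m'] ce := stronglyMeasurable_condExp
  have hgabs : Integrable (fun x => |g x|) μ := hg.abs
  have hcenn : 0 ≤ᵐ[μ] ce := condExp_nonneg (ae_of_all _ fun x => abs_nonneg _)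
  have habs : ∀ᵐ x ∂μ, |(μ[g|m']) x| ≤ ce x := by
    have h1 : μ[g|m'] ≤ᵐ[μ] ce :=
      condExp_mono hg hgabs (ae_of_all _ fun x => le_abs_self _)
    have h2 : μ[-g|m'] ≤ᵐ[μ] ce :=
      condExp_mono hg.neg hgabs (ae_of_all _ fun x => neg_le_abs _)
    have h3 := condExp_neg (m := m') (μ := μ) g
    filter_upwards [h1, h2, h3] with x hx1 hx2 hx3
    rw [abs_le]
    refine ⟨?_, hx1⟩
    have : -(μ[g|m']) x ≤ ce x := by
      have : (-(μ[g|m'])) x ≤ ce x := by rw [← hx3]; exact hx2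
      simpa using this
    linarith
  set EE : X → ℝ≥0∞ := fun x => ENNReal.ofReal (ce x) with hEE
  set HH : X → ℝ≥0∞ := fun x => ENNReal.ofReal |g x| with hHH
  have hEEm' : Measurable[m'] EE := hceSM.measurable.ennreal_ofReal
  have hEEm0 : Measurable EE := hEEm'.mono hm' le_rfl
  have hHHm0 : Measurable HH := hgm.abs.ennreal_ofReal
  -- the key duality identity
  have hwd : (μ.withDensity EE).trim hm' = (μ.withDensity HH).trim hm' := by
    refine @Measure.ext _ m' _ _ (fun s hs => ?_)
    rw [trim_measurableSet_eq hm' hs, trim_measurableSet_eq hm' hs,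
      withDensity_apply _ (hm' s hs), withDensity_apply _ (hm' s hs)]
    have e1 : ∫⁻ x in s, EE x ∂μ = ENNReal.ofReal (∫ x in s, ce x ∂μ) :=
      (ofReal_integral_eq_lintegral_ofReal (integrable_condExp.restrict)
        (ae_restrict_of_ae hcenn)).symm
    have e2 : ∫⁻ x in s, HH x ∂μ = ENNReal.ofReal (∫ x in s, |g x| ∂μ) :=
      (ofReal_integral_eq_lintegral_ofReal (hgabs.restrict)
        (ae_restrict_of_ae (ae_of_all _ fun x => abs_nonneg _))).symm
    rw [e1, e2, setIntegral_condExp hm' hgabs hs]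
  have KEY : ∀ k : X → ℝ≥0∞, Measurable[m'] k →
      ∫⁻ x, k x * EE x ∂μ = ∫⁻ x, k x * HH x ∂μ := by
    intro k hk
    have hk0 : Measurable k := hk.mono hm' le_rfl
    have c1 : ∫⁻ x, k x * EE x ∂μ = ∫⁻ x, k x ∂(μ.withDensity EE) := by
      rw [lintegral_withDensity_eq_lintegral_mul _ hEEm0 hk0]
      congr 1; funext x; exact (mul_comm _ _)
    have c2 : ∫⁻ x, k x * HH x ∂μ = ∫⁻ x, k x ∂(μ.withDensity HH) := by
      rw [lintegral_withDensity_eq_lintegral_mul _ hHHm0 hk0]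
      congr 1; funext x; exact (mul_comm _ _)
    rw [c1, c2, ← lintegral_trim hm' hk, ← lintegral_trim hm' hk, hwd]
  -- first reduction: bound `|condexp g|` by `ce`
  have hred : ∫⁻ x in R, ENNReal.ofReal (|(μ[g|m']) x| ^ p') ∂μ
      ≤ ∫⁻ x in R, EE x ^ p' ∂μ := by
    refine lintegral_mono_ae ?_
    filter_upwards [ae_restrict_of_ae habs] with x hx
    rw [← ENNReal.ofReal_rpow_of_nonneg (abs_nonneg _) hp'0.le]
    exact ENNReal.rpow_le_rpow (ENNReal.ofReal_le_ofReal hx) hp'0.le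
  have hRHS : ∫⁻ x in R, HH x ^ p' ∂μ = ∫⁻ x in R, ENNReal.ofReal (|g x| ^ p') ∂μ := by
    apply lintegral_congr
    intro x
    rw [hHH]
    exact ENNReal.ofReal_rpow_of_nonneg (abs_nonneg _) hp'0.le
  refine le_trans hred ?_
  rw [← hRHS]
  -- main inequality : ∫⁻ in R, EE^p' ≤ ∫⁻ in R, HH^p'
  rcases eq_or_lt_of_le hp' with hpeq | hplt
  · -- p' = 1
    simp only [← hpeq, ENNReal.rpow_one]
    set k : X → ℝ≥0∞ := R.indicator (fun _ => (1 : ℝ≥0∞)) with hkdef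
    have hk : Measurable[m'] k := measurable_const.indicator hR
    have e1 : ∫⁻ x in R, EE x ∂μ = ∫⁻ x, k x * EE x ∂μ := by
      rw [← lintegral_indicator (hm' _ hR) _]
      apply lintegral_congr
      intro x
      by_cases hx : x ∈ R
      · simp [hkdef, Set.indicator_of_mem hx]
      · simp [hkdef, Set.indicator_of_notMem hx]
    have e2 : ∫⁻ x in R, HH x ∂μ = ∫⁻ x, k x * HH x ∂μ := by
      rw [← lintegral_indicator (hm' _ hR) _]
      apply lintegral_congr
      intro x
      by_cases hx : x ∈ R
      · simp [hkdef, Set.indicator_of_mem hx]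
      · simp [hkdef, Set.indicator_of_notMem hx]
    rw [e1, e2, KEY k hk]
  · -- 1 < p'
    set q' : ℝ := p' / (p' - 1) with hq'
    have hpq : p'.HolderConjugate q' := Real.HolderConjugate.conjExponent hplt
    have hq'0 : 0 < q' := hpq.symm.pos
    have hsub0 : p' - 1 ≠ 0 := ne_of_gt (by linarith)
    have hmulpq : (p' - 1) * q' = p' := by
      rw [hq']; field_simp
    have hinvsum : 1 / q' + 1 / p' = 1 := by
      rw [one_div, one_div, add_comm]
      exact hpq.inv_add_inv_eq_one
    set Sp : ℕ → Set X := spanningSets (μ.trim hm') with hSp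
    have hSpm : ∀ j, MeasurableSet[m'] (Sp j) := fun j => measurableSet_spanningSets _ j
    have hSpfin : ∀ j, μ (Sp j) < ⊤ := fun j => by
      rw [← trim_measurableSet_eq hm' (hSpm j)]
      exact measure_spanningSets_lt_top _ j
    have hSpmono : Monotone Sp := monotone_spanningSets _
    set fj : ℕ → X → ℝ≥0∞ :=
      fun j => (R ∩ Sp j).indicator (fun x => (EE x ⊓ (j : ℝ≥0∞)) ^ p') with hfj
    set B : ℝ≥0∞ := ∫⁻ x, R.indicator (fun x => HH x ^ p') x ∂μ with hB
    have hBR : B = ∫⁻ x in R, HH x ^ p' ∂μ := lintegral_indicator (hm' _ hR) _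
    have hAB : ∀ j, ∫⁻ x, fj j x ∂μ ≤ B := by
      intro j
      set A : ℝ≥0∞ := ∫⁻ x, fj j x ∂μ with hA
      by_cases hBtop : B = ⊤
      · rw [hBtop]; exact le_top
      set k₁ : X → ℝ≥0∞ :=
        (R ∩ Sp j).indicator (fun x => (EE x ⊓ (j : ℝ≥0∞)) ^ (p' - 1)) with hk₁
      have hk₁m' : Measurable[m'] k₁ :=
        (((hEEm'.min measurable_const).pow measurable_const)).indicator
          (hR.inter (hSpm j))
      have hk₁m0 : Measurable k₁ := hk₁m'.mono hm' le_rfl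
      -- A j finite
      have hAfin : A ≠ ⊤ := by
        have hb : ∀ x, fj j x ≤ (R ∩ Sp j).indicator (fun _ => ((j : ℝ≥0∞)) ^ p') x := by
          intro x
          by_cases hx : x ∈ R ∩ Sp j
          · rw [hfj]
            simp only [Set.indicator_of_mem hx]
            exact ENNReal.rpow_le_rpow (min_le_right _ _) hp'0.le
          · rw [hfj]
            simp only [Set.indicator_of_notMem hx, le_refl]
        have : A ≤ ((j : ℝ≥0∞)) ^ p' * μ (R ∩ Sp j) := by
          rw [hA]
          calc ∫⁻ x, fj j x ∂μ ≤ ∫⁻ x, (R ∩ Sp j).indicator (fun _ => ((j : ℝ≥0∞)) ^ p') x ∂μ :=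
            lintegral_mono hb
          _ = ((j : ℝ≥0∞)) ^ p' * μ (R ∩ Sp j) :=
            lintegral_indicator_const (hm' _ (hR.inter (hSpm j))) _
        refine ne_top_of_le_ne_top ?_ this
        exact (ENNReal.mul_lt_top
          (ENNReal.rpow_lt_top_of_nonneg hp'0.le (ENNReal.natCast_ne_top j))
          (lt_of_le_of_lt (measure_mono Set.inter_subset_right) (hSpfin j))).ne
      -- step 1 : A ≤ ∫ k₁ * EE
      have hstep1 : A ≤ ∫⁻ x, k₁ x * EE x ∂μ := by
        rw [hA]
        refine lintegral_mono fun x => ?_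
        by_cases hx : x ∈ R ∩ Sp j
        · rw [hfj, hk₁]
          simp only [Set.indicator_of_mem hx]
          set a := EE x ⊓ (j : ℝ≥0∞) with ha
          by_cases ha0 : a = 0
          · rw [ha0, ENNReal.zero_rpow_of_pos hp'0]
            exact zero_le
          · have haT : a ≠ ⊤ :=
              ne_top_of_le_ne_top (ENNReal.natCast_ne_top j) (min_le_right _ _)
            calc a ^ p' = a ^ ((p' - 1) + 1) := by norm_num
            _ = a ^ (p' - 1) * a ^ (1 : ℝ) := ENNReal.rpow_add _ _ ha0 haT
            _ = a ^ (p' - 1) * a := by rw [ENNReal.rpow_one]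
            _ ≤ a ^ (p' - 1) * EE x := mul_le_mul_right (min_le_left _ _) _
        · rw [hfj, hk₁]
          simp only [Set.indicator_of_notMem hx, zero_mul, le_refl]
      -- step 2 : KEY
      have hstep2 : ∫⁻ x, k₁ x * EE x ∂μ = ∫⁻ x, k₁ x * HH x ∂μ := KEY k₁ hk₁m'
      -- step 3 : insert indicator on HH
      have hstep3 : ∫⁻ x, k₁ x * HH x ∂μ
          = ∫⁻ x, k₁ x * (R.indicator HH) x ∂μ := by
        apply lintegral_congr
        intro x
        by_cases hx : x ∈ R ∩ Sp j
        · rw [Set.indicator_of_mem hx.1]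
        · rw [hk₁]; simp only [Set.indicator_of_notMem hx, zero_mul]
      -- step 4 : Hölder
      have hstep4 : ∫⁻ x, k₁ x * (R.indicator HH) x ∂μ
          ≤ (∫⁻ x, k₁ x ^ q' ∂μ) ^ (1 / q') * (∫⁻ x, (R.indicator HH) x ^ p' ∂μ) ^ (1 / p') :=
        ENNReal.lintegral_mul_le_Lp_mul_Lq μ hpq.symm hk₁m0.aemeasurable
          ((hHHm0.indicator (hm' _ hR)).aemeasurable)
      -- identify the two factors
      have hfac1 : ∫⁻ x, k₁ x ^ q' ∂μ = A := by
        rw [hA]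
        apply lintegral_congr
        intro x
        by_cases hx : x ∈ R ∩ Sp j
        · rw [hk₁, hfj]
          simp only [Set.indicator_of_mem hx]
          rw [← ENNReal.rpow_mul, hmulpq]
        · rw [hk₁, hfj]
          simp only [Set.indicator_of_notMem hx]
          exact ENNReal.zero_rpow_of_pos hq'0
      have hfac2 : ∫⁻ x, (R.indicator HH) x ^ p' ∂μ = B := by
        rw [hB]
        apply lintegral_congr
        intro x
        by_cases hx : x ∈ R
        · rw [Set.indicator_of_mem hx, Set.indicator_of_mem hx]
        · rw [Set.indicator_of_notMem hx, Set.indicator_of_notMem hx]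
          exact ENNReal.zero_rpow_of_pos hp'0
      have hchain : A ≤ A ^ (1 / q') * B ^ (1 / p') := by
        calc A ≤ ∫⁻ x, k₁ x * EE x ∂μ := hstep1
        _ = ∫⁻ x, k₁ x * (R.indicator HH) x ∂μ := by rw [hstep2, hstep3]
        _ ≤ (∫⁻ x, k₁ x ^ q' ∂μ) ^ (1 / q') * (∫⁻ x, (R.indicator HH) x ^ p' ∂μ) ^ (1 / p') :=
          hstep4
        _ = A ^ (1 / q') * B ^ (1 / p') := by rw [hfac1, hfac2]
      -- conclude A ≤ B
      by_cases hA0 : A = 0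
      · rw [hA0]; exact zero_le
      have hsplit : A = A ^ (1 / q') * A ^ (1 / p') := by
        rw [← ENNReal.rpow_add _ _ hA0 hAfin, hinvsum, ENNReal.rpow_one]
      have hq'ne0 : A ^ (1 / q') ≠ 0 := by
        simp only [ne_eq, ENNReal.rpow_eq_zero_iff, not_or]
        constructor
        · rintro ⟨h, -⟩; exact hA0 h
        · rintro ⟨h, -⟩; exact hAfin h
      have hq'neT : A ^ (1 / q') ≠ ⊤ := by
        simp only [ne_eq, ENNReal.rpow_eq_top_iff, not_or]
        constructor
        · rintro ⟨h, -⟩; exact hA0 h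
        · rintro ⟨h, -⟩; exact hAfin h
      have hle : A ^ (1 / p') ≤ B ^ (1 / p') := by
        exact (ENNReal.mul_le_mul_iff_right hq'ne0 hq'neT).mp (hsplit.symm.trans_le hchain)
      have := ENNReal.rpow_le_rpow hle hp'0.le
      rwa [← ENNReal.rpow_mul, ← ENNReal.rpow_mul, one_div,
        inv_mul_cancel₀ (ne_of_gt hp'0), ENNReal.rpow_one, ENNReal.rpow_one] at this
    -- monotone convergence
    have hmono : Monotone fj := by
      intro i j hij x
      by_cases hx : x ∈ R ∩ Sp i
      · have hx' : x ∈ R ∩ Sp j := ⟨hx.1, hSpmono hij hx.2⟩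
        rw [hfj]
        simp only [Set.indicator_of_mem hx, Set.indicator_of_mem hx']
        refine ENNReal.rpow_le_rpow ?_ hp'0.le
        exact inf_le_inf le_rfl (Nat.cast_le.mpr hij)
      · rw [hfj]
        simp only [Set.indicator_of_notMem hx]
        exact zero_le
    have hmeasj : ∀ j, Measurable (fj j) := fun j =>
      (((hEEm0.min measurable_const).pow measurable_const)).indicator
        (hm' _ (hR.inter (hSpm j)))
    have hsup : ∀ x, ⨆ j, fj j x = R.indicator (fun x => EE x ^ p') x := by
      intro x
      by_cases hxR : x ∈ R
      · have hxU : x ∈ ⋃ j, Sp j := by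
          rw [hSp, iUnion_spanningSets]; trivial
        obtain ⟨j₀, hj₀⟩ := Set.mem_iUnion.mp hxU
        obtain ⟨J, hJ⟩ := ENNReal.exists_nat_gt (show EE x ≠ ⊤ from ENNReal.ofReal_ne_top)
        apply le_antisymm
        · refine iSup_le fun j => ?_
          by_cases hx : x ∈ R ∩ Sp j
          · rw [hfj]
            simp only [Set.indicator_of_mem hx, Set.indicator_of_mem hxR]
            exact ENNReal.rpow_le_rpow (min_le_left _ _) hp'0.le
          · rw [hfj]
            simp only [Set.indicator_of_notMem hx]
            exact zero_le
        · have hxmem : x ∈ R ∩ Sp (max j₀ J) := ⟨hxR, hSpmono (le_max_left _ _) hj₀⟩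
          have heq : fj (max j₀ J) x = EE x ^ p' := by
            rw [hfj]
            simp only [Set.indicator_of_mem hxmem]
            congr 1
            refine min_eq_left ?_
            calc EE x ≤ (J : ℝ≥0∞) := le_of_lt hJ
            _ ≤ ((max j₀ J : ℕ) : ℝ≥0∞) := Nat.cast_le.mpr (le_max_right _ _)
          rw [Set.indicator_of_mem hxR, ← heq]
          exact le_iSup (fun j => fj j x) (max j₀ J)
      · simp only [Set.indicator_of_notMem hxR]
        refine le_antisymm (iSup_le fun j => ?_) (zero_le)
        rw [hfj]
        simp only [Set.indicator_of_notMem (fun h : x ∈ R ∩ Sp j => hxR h.1)]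
        exact le_refl _
    calc ∫⁻ x in R, EE x ^ p' ∂μ
        = ∫⁻ x, R.indicator (fun x => EE x ^ p') x ∂μ :=
          (lintegral_indicator (hm' _ hR) _).symm
      _ = ∫⁻ x, ⨆ j, fj j x ∂μ := by
          apply lintegral_congr; intro x; rw [hsup]
      _ = ⨆ j, ∫⁻ x, fj j x ∂μ := lintegral_iSup hmeasj hmono
      _ ≤ B := iSup_le hAB
      _ = ∫⁻ x in R, HH x ^ p' ∂μ := hBR



variable {X : Type*}

lemma measurable_comp_rightInv {m : MeasurableSpace X} {τ σ : X → X}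
    (hτσ : ∀ x, τ (σ x) = x) {r : X → ℝ} (hr : Measurable[MeasurableSpace.comap τ m] r) :
    Measurable[m] (fun x => r (σ x)) := by
  intro s hs
  obtain ⟨A, hA, hAeq⟩ := hr hs
  have : (fun x => r (σ x)) ⁻¹' s = A := by
    ext x
    simp only [Set.mem_preimage]
    constructor
    · intro hx
      have : σ x ∈ r ⁻¹' s := hx
      rw [← hAeq] at this
      simpa [hτσ x] using this
    · intro hx
      have : σ x ∈ τ ⁻¹' A := by simpa [hτσ x] using hx
      rw [hAeq] at this
      exact this
  rw [this]
  exact hA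

lemma lint_of_eLpNorm_le {m0 : MeasurableSpace X} {μ : Measure X} {p : ℝ≥0∞}
    (hp0 : p ≠ 0) (hpt : p ≠ ∞) {r : X → ℝ} {δ : ℝ} (hδ : 0 ≤ δ)
    (hr : eLpNorm r p μ ≤ ENNReal.ofReal δ) :
    ∫⁻ x, ENNReal.ofReal (|r x| ^ p.toReal) ∂μ ≤ ENNReal.ofReal (δ ^ p.toReal) := by
  have hp'0 : 0 < p.toReal := ENNReal.toReal_pos hp0 hpt
  have h1 : eLpNorm r p μ ^ p.toReal ≤ (ENNReal.ofReal δ) ^ p.toReal :=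
    ENNReal.rpow_le_rpow hr hp'0.le
  rw [eLpNorm_eq_lintegral_rpow_enorm_toReal hp0 hpt, ← ENNReal.rpow_mul, one_div,
    inv_mul_cancel₀ (ne_of_gt hp'0), ENNReal.rpow_one] at h1
  calc ∫⁻ x, ENNReal.ofReal (|r x| ^ p.toReal) ∂μ
      = ∫⁻ x, ‖r x‖ₑ ^ p.toReal ∂μ := by
        apply lintegral_congr
        intro x
        rw [Real.enorm_eq_ofReal_abs, ENNReal.ofReal_rpow_of_nonneg (abs_nonneg _) hp'0.le]
    _ ≤ (ENNReal.ofReal δ) ^ p.toReal := h1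
    _ = ENNReal.ofReal (δ ^ p.toReal) := ENNReal.ofReal_rpow_of_nonneg hδ hp'0.le

lemma cheb {m0 : MeasurableSpace X} {μ : Measure X} {p : ℝ≥0∞}
    (hp0 : p ≠ 0) (hpt : p ≠ ∞) {r : X → ℝ} (hrm : Measurable r) {δ c : ℝ}
    (hδ : 0 ≤ δ) (hc : 0 < c) (hr : eLpNorm r p μ ≤ ENNReal.ofReal δ) :
    μ {x | c ≤ |r x|} ≤ ENNReal.ofReal ((δ / c) ^ p.toReal) := by
  have hp'0 : 0 < p.toReal := ENNReal.toReal_pos hp0 hpt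
  have hlint := lint_of_eLpNorm_le hp0 hpt hδ hr
  set S : Set X := {x | c ≤ |r x|} with hS
  have hset : MeasurableSet S := measurableSet_le measurable_const hrm.abs
  have h2 : ENNReal.ofReal (c ^ p.toReal) * μ S ≤ ENNReal.ofReal (δ ^ p.toReal) := by
    calc ENNReal.ofReal (c ^ p.toReal) * μ S
        = ∫⁻ _ in S, ENNReal.ofReal (c ^ p.toReal) ∂μ := (setLIntegral_const _ _).symm
      _ ≤ ∫⁻ x in S, ENNReal.ofReal (|r x| ^ p.toReal) ∂μ := by
          refine lintegral_mono_ae ?_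
          rw [ae_restrict_iff' hset]
          refine ae_of_all _ fun x hx => ?_
          exact ENNReal.ofReal_le_ofReal (Real.rpow_le_rpow hc.le hx hp'0.le)
      _ ≤ ∫⁻ x, ENNReal.ofReal (|r x| ^ p.toReal) ∂μ := setLIntegral_le_lintegral _ _
      _ ≤ ENNReal.ofReal (δ ^ p.toReal) := hlint
  have hcne : ENNReal.ofReal (c ^ p.toReal) ≠ 0 := by
    simp only [ne_eq, ENNReal.ofReal_eq_zero, not_le]
    positivity
  have hcnT : ENNReal.ofReal (c ^ p.toReal) ≠ ⊤ := ENNReal.ofReal_ne_top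
  calc μ S = (ENNReal.ofReal (c ^ p.toReal))⁻¹ * (ENNReal.ofReal (c ^ p.toReal) * μ S) := by
        rw [← mul_assoc, ENNReal.inv_mul_cancel hcne hcnT, one_mul]
    _ ≤ (ENNReal.ofReal (c ^ p.toReal))⁻¹ * ENNReal.ofReal (δ ^ p.toReal) :=
        mul_le_mul_right h2 _
    _ = ENNReal.ofReal ((δ / c) ^ p.toReal) := by
        rw [← ENNReal.ofReal_inv_of_pos (by positivity), ← ENNReal.ofReal_mul (by positivity)]
        congr 1
        rw [Real.div_rpow hδ hc.le]
        field_simp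


lemma msel_lt_abs {mm : MeasurableSpace X} {g : X → ℝ} (hg : Measurable[mm] g) (c : ℝ) :
    MeasurableSet[mm] {x | c < |g x|} :=
  measurableSet_lt measurable_const hg.abs

lemma msel_abs_le {mm : MeasurableSpace X} {g : X → ℝ} (hg : Measurable[mm] g) (c : ℝ) :
    MeasurableSet[mm] {x | |g x| ≤ c} :=
  measurableSet_le hg.abs measurable_const

lemma meas_sub' {mm : MeasurableSpace X} {g h : X → ℝ} (hg : Measurable[mm] g)
    (hh : Measurable[mm] h) : Measurable[mm] (fun x => g x - h x) :=
  hg.sub hh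

lemma meas_sub_const' {mm : MeasurableSpace X} {g : X → ℝ} (hg : Measurable[mm] g) (c : ℝ) :
    Measurable[mm] (fun x => g x - c) :=
  hg.sub measurable_const

lemma meas_mul' {mm : MeasurableSpace X} {g h : X → ℝ} (hg : Measurable[mm] g)
    (hh : Measurable[mm] h) : Measurable[mm] (fun x => g x * h x) :=
  hg.mul hh

lemma meas_prod' {mm : MeasurableSpace X} {w : X → ℝ} {τ : X → X} (hw : Measurable[mm] w)
    (hτ : Measurable[mm] τ) (j : ℕ) :
    Measurable[mm] (fun x => ∏ i ∈ Finset.range j, w (τ^[i] x)) :=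
  Finset.measurable_prod _ fun i _ => hw.comp (hτ.iterate i)

lemma meas_ofReal_abs_rpow {mm : MeasurableSpace X} {g : X → ℝ} (hg : Measurable[mm] g)
    (e : ℝ) : Measurable[mm] (fun x => ENNReal.ofReal (|g x| ^ e)) :=
  (hg.abs.pow measurable_const).ennreal_ofReal

lemma meas_phi' {mm : MeasurableSpace X} {h1 : X → ℝ≥0∞} {h2 : X → ℝ}
    (H1 : Measurable[mm] h1) (H2 : Measurable[mm] h2) (e : ℝ) :
    Measurable[mm] (fun x => (h1 x).toReal ^ e * h2 x) :=
  (H1.ennreal_toReal.pow measurable_const).mul H2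

end Stmt3Aux

/-- Necessary conditions for subspace-hypercyclicity of the conditional
weighted composition operator `T_u f = E^𝒜(u·(f∘φ))` when `φ` is a nonsingular, finitely
non-mixing bimeasurable bijection with `φ⁻¹(𝒜) ⊆ 𝒜`. -/
theorem stmt3
    {X : Type*} (m : MeasurableSpace X) {m0 : MeasurableSpace X} (hm : m ≤ m0)
    (μ : Measure X) [μ.IsComplete] [SigmaFinite μ] [SigmaFinite (μ.trim hm)]
    (p : ℝ≥0∞) [Fact (1 ≤ p)] (hp_top : p ≠ ∞)
    (φ ψ : X → X) (hφ : Measurable φ) (hψ : Measurable ψ)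
    (hψφ : Function.LeftInverse ψ φ) (hφψ : Function.RightInverse ψ φ)
    (hns : μ.map φ ≪ μ)
    (hfnm : ∀ F : Set X, MeasurableSet F → μ F < ∞ → ∃ N : ℕ, ∀ n > N, F ∩ φ^[n] '' F = ∅)
    (hinv : ∀ A : Set X, MeasurableSet[m] A → MeasurableSet[m] (φ ⁻¹' A))
    (u : X → ℝ)
    (T : Lp ℝ p μ →L[ℝ] Lp ℝ p μ)
    (hT : ∀ f : Lp ℝ p μ, ⇑(T f) =ᵐ[μ] μ[fun x => u x * f (φ x)|m])
    (hhc : SubspaceHypercyclic (⇑T) (lpMeas ℝ ℝ m p μ : Set (Lp ℝ p μ))) :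
    ∀ F : Set X, MeasurableSet[m] F → 0 < μ F → μ F < ∞ →
      ∃ (V : ℕ → Set X) (n : ℕ → ℕ),
        (∀ k, V k ⊆ F) ∧ (∀ k, MeasurableSet[m] (V k)) ∧
        Tendsto (fun k => μ (V k)) atTop (𝓝 (μ F)) ∧
        StrictMono n ∧ (∀ k, 0 < n k) ∧
        Tendsto (fun k => eLpNorm
            (fun x => (∏ i ∈ Finset.range (n k), (μ[u|m]) (φ^[i] x))⁻¹)
            ∞ (μ.restrict (V k))) atTop (𝓝 0) ∧
        Tendsto (fun k => eLpNorm
            (fun x => ((((μ.map (φ^[n k])).trim hm).rnDeriv (μ.trim hm)) x).toReal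
              ^ (1 / p.toReal) *
              (μ[fun y => ∏ i ∈ Finset.range (n k), (μ[u|m]) (φ^[i] y)|
                  MeasurableSpace.comap (φ^[n k]) m]) (ψ^[n k] x))
            ∞ (μ.restrict (V k))) atTop (𝓝 0) := by
  intro F hF hμF0 hμFfin
  classical
  have hp1 : (1 : ℝ≥0∞) ≤ p := Fact.out
  have hp0 : p ≠ 0 := (lt_of_lt_of_le zero_lt_one hp1).ne'
  have hp'1 : 1 ≤ p.toReal := by
    have h := ENNReal.toReal_mono hp_top hp1
    simpa using h
  have hp'0 : 0 < p.toReal := lt_of_lt_of_le zero_lt_one hp'1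
  suffices KEY : ∀ ε : ℝ, 0 < ε → ε ≤ 1 → ∀ b : ℕ, ∃ nn : ℕ, b < nn ∧
      ∃ V : Set X, MeasurableSet[m] V ∧ V ⊆ F ∧ μ (F \ V) ≤ ENNReal.ofReal ε ∧
      eLpNorm (fun x => (∏ i ∈ Finset.range nn, (μ[u|m]) (φ^[i] x))⁻¹) ∞ (μ.restrict V)
        ≤ ENNReal.ofReal ε ∧
      eLpNorm (fun x => ((((μ.map (φ^[nn])).trim hm).rnDeriv (μ.trim hm)) x).toReal
          ^ (1 / p.toReal) *
          (μ[fun y => ∏ i ∈ Finset.range nn, (μ[u|m]) (φ^[i] y)|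
              MeasurableSpace.comap (φ^[nn]) m]) (ψ^[nn] x)) ∞ (μ.restrict V)
        ≤ ENNReal.ofReal ε by
    have KEY' : ∀ k b : ℕ, ∃ nn : ℕ, b < nn ∧
        ∃ V : Set X, MeasurableSet[m] V ∧ V ⊆ F ∧
        μ (F \ V) ≤ ENNReal.ofReal (1/((k:ℝ)+1)) ∧
        eLpNorm (fun x => (∏ i ∈ Finset.range nn, (μ[u|m]) (φ^[i] x))⁻¹) ∞ (μ.restrict V)
          ≤ ENNReal.ofReal (1/((k:ℝ)+1)) ∧
        eLpNorm (fun x => ((((μ.map (φ^[nn])).trim hm).rnDeriv (μ.trim hm)) x).toReal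
            ^ (1 / p.toReal) *
            (μ[fun y => ∏ i ∈ Finset.range nn, (μ[u|m]) (φ^[i] y)|
                MeasurableSpace.comap (φ^[nn]) m]) (ψ^[nn] x)) ∞ (μ.restrict V)
          ≤ ENNReal.ofReal (1/((k:ℝ)+1)) := by
      intro k b
      refine KEY (1/((k:ℝ)+1)) (by positivity) ?_ b
      rw [div_le_one (by positivity)]
      have : (0:ℝ) ≤ (k:ℝ) := Nat.cast_nonneg k
      linarith
    choose nnf hlt Vf hVm hVsub hVmeas hV1 hV2 using KEY'
    set B : ℕ → ℕ := fun k => Nat.rec 0 (fun k ih => nnf k ih) k with hB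
    set n : ℕ → ℕ := fun k => nnf k (B k) with hn
    set V : ℕ → Set X := fun k => Vf k (B k) with hV
    have hBsucc : ∀ k, B (k + 1) = n k := fun k => rfl
    have hones : Tendsto (fun k : ℕ => ENNReal.ofReal (1/((k:ℝ)+1))) atTop (𝓝 0) := by
      rw [show (0:ℝ≥0∞) = ENNReal.ofReal 0 by simp]
      exact (ENNReal.continuous_ofReal.tendsto 0).comp tendsto_one_div_add_atTop_nhds_zero_nat
    refine ⟨V, n, fun k => hVsub k (B k), fun k => hVm k (B k), ?_, ?_, ?_, ?_, ?_⟩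
    · -- measure tendsto
      have hupper : ∀ k : ℕ, μ (V k) ≤ μ F := fun k => measure_mono (hVsub k (B k))
      have hlower : ∀ k : ℕ, μ F - ENNReal.ofReal (1/((k:ℝ)+1)) ≤ μ (V k) := by
        intro k
        rw [tsub_le_iff_right]
        calc μ F = μ (V k ∪ (F \ V k)) := by rw [Set.union_diff_cancel (hVsub k (B k))]
        _ ≤ μ (V k) + μ (F \ V k) := measure_union_le _ _
        _ ≤ μ (V k) + ENNReal.ofReal (1/((k:ℝ)+1)) := add_le_add_right (hVmeas k (B k)) _
      have hlim : Tendsto (fun k : ℕ => μ F - ENNReal.ofReal (1/((k:ℝ)+1))) atTop (𝓝 (μ F)) := by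
        have h2 := ((ENNReal.continuous_sub_left hμFfin.ne).tendsto 0).comp hones
        simpa [Function.comp_def] using h2
      exact tendsto_of_tendsto_of_tendsto_of_le_of_le hlim tendsto_const_nhds hlower hupper
    · exact strictMono_nat_of_lt_succ fun k => hlt (k+1) (B (k+1))
    · exact fun k => lt_of_le_of_lt (Nat.zero_le _) (hlt k (B k))
    · exact tendsto_of_tendsto_of_tendsto_of_le_of_le tendsto_const_nhds hones
        (fun k => zero_le) (fun k => hV1 k (B k))
    · exact tendsto_of_tendsto_of_tendsto_of_le_of_le tendsto_const_nhds hones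
        (fun k => zero_le) (fun k => hV2 k (B k))
  by_cases hu : Integrable u μ
  · -- main branch : u integrable
    obtain ⟨g, hg⟩ := hhc
    set D : Set (Lp ℝ p μ) :=
      (Set.range fun j : ℕ => (⇑T)^[j] g) ∩ (lpMeas ℝ ℝ m p μ : Set (Lp ℝ p μ)) with hD
    set χLp : Lp ℝ p μ := indicatorConstLp p (hm F hF) hμFfin.ne (1:ℝ) with hχdef
    have hχcoe : ⇑χLp =ᵐ[μ] F.indicator (fun _ => (1:ℝ)) := indicatorConstLp_coeFn
    have hχM : χLp ∈ lpMeas ℝ ℝ m p μ := by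
      rw [mem_lpMeas_iff_aestronglyMeasurable]
      exact ⟨F.indicator (fun _ => (1:ℝ)), stronglyMeasurable_const.indicator hF, hχcoe⟩
    have hχne : χLp ≠ 0 := by
      intro h0
      have h1 : ‖χLp‖ = ‖(1:ℝ)‖ * ((μ F).toReal) ^ (1 / p.toReal) :=
        norm_indicatorConstLp hp0 hp_top
      rw [h0, norm_zero, norm_one, one_mul] at h1
      have h2 : 0 < ((μ F).toReal) ^ (1 / p.toReal) :=
        Real.rpow_pos_of_pos (ENNReal.toReal_pos hμF0.ne' hμFfin.ne) _
      linarith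
    have hseg : ∀ t : ℝ, t • χLp ∈ closure D := fun t =>
      hg _ (SetLike.mem_coe.mpr (Submodule.smul_mem _ t hχM))
    have hT0 : ∀ k : ℕ, (⇑T)^[k] (0 : Lp ℝ p μ) = 0 := by
      intro k
      induction k with
      | zero => rfl
      | succ k ih => rw [Function.iterate_succ_apply', ih, map_zero]
    have hnz : ∀ j : ℕ, (⇑T)^[j] g ≠ 0 := by
      by_contra hcon
      push_neg at hcon
      obtain ⟨j₀, hj₀⟩ := hcon
      set S₀ : Finset (Lp ℝ p μ) :=
        insert 0 ((Finset.range (j₀+1)).image (fun j => (⇑T)^[j] g)) with hS₀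
      have hDsub : D ⊆ ↑S₀ := by
        rintro d ⟨⟨j, rfl⟩, -⟩
        show (⇑T)^[j] g ∈ ↑S₀
        by_cases hj : j ≤ j₀
        · exact Finset.mem_coe.mpr (Finset.mem_insert_of_mem
            (Finset.mem_image.mpr ⟨j, Finset.mem_range.mpr (by omega), rfl⟩))
        · have hzero : (⇑T)^[j] g = 0 := by
            have hjeq : j = (j - j₀) + j₀ := by omega
            rw [hjeq, Function.iterate_add_apply, hj₀, hT0]
          rw [hzero]
          exact Finset.mem_coe.mpr (Finset.mem_insert_self _ _)
      obtain ⟨d, hdD, hdS, -⟩ := Stmt3Aux.fresh_point D χLp hχne hseg S₀ one_pos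
      exact hdS (hDsub hdD)
    have hchain : ∀ f : Lp ℝ p μ, T f ≠ 0 → Integrable (fun x => u x * f (φ x)) μ := by
      intro f hne
      by_contra hni
      have hzero : μ[fun x => u x * f (φ x)|m] = 0 := condExp_of_not_integrable hni
      have h1 := hT f
      rw [hzero] at h1
      exact hne (Lp.eq_zero_iff_ae_eq_zero.mpr h1)
    have hφm : @Measurable X X m m φ := fun A hA => hinv A hA
    have hφim : ∀ i : ℕ, @Measurable X X m m (φ^[i]) := fun i => Measurable.iterate hφm i
    have hwSM : StronglyMeasurable[m] (μ[u|m] : X → ℝ) := stronglyMeasurable_condExp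
    have hwm : Measurable[m] (μ[u|m] : X → ℝ) := hwSM.measurable
    have hPm : ∀ j : ℕ, Measurable[m] (fun x => ∏ i ∈ Finset.range j, (μ[u|m]) (φ^[i] x)) :=
      fun j => Stmt3Aux.meas_prod' hwm hφm j
    have hIter : ∀ (f : Lp ℝ p μ) (f' : X → ℝ), StronglyMeasurable[m] f' → (⇑f =ᵐ[μ] f') →
        (∀ i : ℕ, T ((⇑T)^[i] f) ≠ 0) → ∀ nn : ℕ,
        ⇑((⇑T)^[nn] f) =ᵐ[μ]
          fun x => (∏ i ∈ Finset.range nn, (μ[u|m]) (φ^[i] x)) * f' (φ^[nn] x) := by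
      intro f f' hf'SM hff' hneT nn
      induction nn with
      | zero =>
        simp only [Function.iterate_zero_apply, Finset.range_zero, Finset.prod_empty, one_mul]
        exact hff'
      | succ nn ih =>
        have hint : Integrable (fun x => u x * ((⇑T)^[nn] f) (φ x)) μ := hchain _ (hneT nn)
        have hcomp : (fun x => ((⇑T)^[nn] f) (φ x)) =ᵐ[μ]
            (fun x => (∏ i ∈ Finset.range nn, (μ[u|m]) (φ^[i] (φ x))) * f' (φ^[nn] (φ x))) := by
          have h1 : ⇑((⇑T)^[nn] f) =ᵐ[μ.map φ]
              (fun x => (∏ i ∈ Finset.range nn, (μ[u|m]) (φ^[i] x)) * f' (φ^[nn] x)) :=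
            ih.filter_mono hns.ae_le
          exact ae_eq_comp hφ.aemeasurable h1
        set Gφ : X → ℝ :=
          fun x => (∏ i ∈ Finset.range nn, (μ[u|m]) (φ^[i] (φ x))) * f' (φ^[nn] (φ x)) with hGφ
        have hGφSM : StronglyMeasurable[m] Gφ := by
          apply StronglyMeasurable.mul
          · exact ((hPm nn).comp hφm).stronglyMeasurable
          · exact hf'SM.comp_measurable ((hφim nn).comp hφm)
        have hGu : Integrable (Gφ * u) μ := by
          refine hint.congr ?_
          filter_upwards [hcomp] with x hx
          simp only [Pi.mul_apply]
          rw [hx]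
          ring
        have hmul := condExp_mul_of_stronglyMeasurable_left hGφSM hGu hu
        have hstep : ⇑((⇑T)^[nn+1] f) =ᵐ[μ] μ[Gφ * u|m] := by
          rw [Function.iterate_succ_apply']
          refine (hT _).trans (condExp_congr_ae ?_)
          filter_upwards [hcomp] with x hx
          simp only [Pi.mul_apply]
          rw [hx]
          ring
        refine hstep.trans (hmul.trans (ae_of_all _ fun x => ?_))
        simp only [Pi.mul_apply]
        rw [Finset.prod_range_succ']
        simp only [Function.iterate_succ_apply, Function.iterate_zero_apply]
        ring
    -- now the quantitative construction
    intro ε hε0 hε1 b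
    have hpow_le : ∀ t : ℝ, 0 < t → t ≤ 1 → t ^ p.toReal ≤ t := by
      intro t h0 h1
      calc t ^ p.toReal ≤ t ^ (1:ℝ) := Real.rpow_le_rpow_of_exponent_ge h0 h1 hp'1
      _ = t := Real.rpow_one t
    set δ : ℝ := ε * ε / 24 with hδdef
    have hδ0 : 0 < δ := by positivity
    obtain ⟨f, hfD, -, hfdist⟩ := Stmt3Aux.fresh_point D χLp hχne hseg ∅ hδ0
    obtain ⟨⟨a, hfa⟩, hfM⟩ := hfD
    have hfa2 : (⇑T)^[a] g = f := hfa
    have hfM' : AEStronglyMeasurable[m] (⇑f) μ := mem_lpMeas_iff_aestronglyMeasurable.mp hfM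
    set f' : X → ℝ := hfM'.mk ⇑f with hf'def
    have hf'SM : StronglyMeasurable[m] f' := hfM'.stronglyMeasurable_mk
    have hff' : ⇑f =ᵐ[μ] f' := hfM'.ae_eq_mk
    have hf'm : Measurable[m] f' := hf'SM.measurable
    set ind : X → ℝ := F.indicator (fun _ => (1:ℝ)) with hinddef
    have hindm : Measurable[m] ind := measurable_const.indicator hF
    have he1 : eLpNorm (fun x => f' x - ind x) p μ ≤ ENNReal.ofReal δ := by
      have hcoe : ⇑(f - χLp) =ᵐ[μ] fun x => f' x - ind x := by
        filter_upwards [Lp.coeFn_sub f χLp, hff', hχcoe] with x h1 h2 h3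
        rw [h1, Pi.sub_apply, h2, h3]
      rw [← eLpNorm_congr_ae hcoe]
      refine le_of_lt ((ENNReal.lt_ofReal_iff_toReal_lt (Lp.eLpNorm_ne_top _)).mpr ?_)
      rw [← Lp.norm_def]
      exact hfdist
    set Bad : Set X := {y | ε/2 < |f' y - ind y|} with hBaddef
    have hBadm : MeasurableSet[m] Bad :=
      Stmt3Aux.msel_lt_abs (Stmt3Aux.meas_sub' hf'm hindm) (ε/2)
    have hμBad : μ Bad ≤ ENNReal.ofReal ((δ/(ε/2)) ^ p.toReal) := by
      refine le_trans (measure_mono ?_) (Stmt3Aux.cheb hp0 hp_top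
        (((Stmt3Aux.meas_sub' hf'm hindm).mono hm le_rfl)) hδ0.le (by positivity) he1)
      intro y hy
      exact le_of_lt (show ε/2 < |f' y - ind y| from hy)
    set G : Set X := F ∪ Bad with hGdef
    have hGm0 : MeasurableSet G := (hm _ hF).union (hm _ hBadm)
    have hμG : μ G < ⊤ := lt_of_le_of_lt (measure_union_le _ _)
      (ENNReal.add_lt_top.mpr ⟨hμFfin, lt_of_le_of_lt hμBad ENNReal.ofReal_lt_top⟩)
    obtain ⟨N, hN⟩ := hfnm G hGm0 hμG
    set S₁ : Finset (Lp ℝ p μ) :=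
      (Finset.range (a + max b N + 1)).image (fun j => (⇑T)^[j] g) with hS₁
    obtain ⟨d, hdD, hdS, hddist⟩ := Stmt3Aux.fresh_point D χLp hχne hseg S₁ hδ0
    obtain ⟨⟨a', hda'⟩, -⟩ := hdD
    have hda2 : (⇑T)^[a'] g = d := hda'
    have ha' : a + max b N < a' := by
      by_contra hle
      push_neg at hle
      exact hdS (Finset.mem_image.mpr ⟨a', Finset.mem_range.mpr (by omega), hda'⟩)
    set nn : ℕ := a' - a with hnn
    have hbnn : max b N < nn := by omega
    have hNnn : N < nn := lt_of_le_of_lt (le_max_right b N) hbnn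
    have hd_eq : (⇑T)^[nn] f = d := by
      have haa : nn + a = a' := by omega
      rw [← hfa2, ← Function.iterate_add_apply, haa, hda2]
    have hneT : ∀ i : ℕ, T ((⇑T)^[i] f) ≠ 0 := by
      intro i
      have h1 : T ((⇑T)^[i] f) = (⇑T)^[(i + a) + 1] g := by
        rw [← hfa2, ← Function.iterate_add_apply]
        exact (Function.iterate_succ_apply' _ _ _).symm
      rw [h1]
      exact hnz _
    have hform : ⇑d =ᵐ[μ]
        fun x => (∏ i ∈ Finset.range nn, (μ[u|m]) (φ^[i] x)) * f' (φ^[nn] x) := by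
      rw [← hd_eq]
      exact hIter f f' hf'SM hff' hneT nn
    have hq₁m : Measurable[m] (fun x =>
        (∏ i ∈ Finset.range nn, (μ[u|m]) (φ^[i] x)) * f' (φ^[nn] x)) :=
      Stmt3Aux.meas_mul' (hPm nn) (hf'm.comp (hφim nn))
    have he2 : eLpNorm (fun x =>
        (∏ i ∈ Finset.range nn, (μ[u|m]) (φ^[i] x)) * f' (φ^[nn] x) - ind x) p μ
        ≤ ENNReal.ofReal δ := by
      have hcoe : ⇑(d - χLp) =ᵐ[μ] fun x =>
          (∏ i ∈ Finset.range nn, (μ[u|m]) (φ^[i] x)) * f' (φ^[nn] x) - ind x := by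
        filter_upwards [Lp.coeFn_sub d χLp, hform, hχcoe] with x h1 h2 h3
        rw [h1, Pi.sub_apply, h2, h3]
      rw [← eLpNorm_congr_ae hcoe]
      refine le_of_lt ((ENNReal.lt_ofReal_iff_toReal_lt (Lp.eLpNorm_ne_top _)).mpr ?_)
      rw [← Lp.norm_def]
      exact hddist
    have hnotG : ∀ x ∈ F, φ^[nn] x ∉ G := by
      intro x hxF hmem
      have h1 : φ^[nn] x ∈ φ^[nn] '' G := ⟨x, Or.inl hxF, rfl⟩
      have h2 := hN nn hNnn
      have : φ^[nn] x ∈ G ∩ φ^[nn] '' G := ⟨hmem, h1⟩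
      rw [h2] at this
      exact this
    set A₁ : Set X := F ∩ {x |
      |(∏ i ∈ Finset.range nn, (μ[u|m]) (φ^[i] x)) * f' (φ^[nn] x) - 1| ≤ 1/2} with hA₁def
    set Good : Set X := F ∩ {y | |f' y - 1| ≤ 1/2} with hGooddef
    have hA₁m : MeasurableSet[m] A₁ := hF.inter
      (Stmt3Aux.msel_abs_le (Stmt3Aux.meas_sub_const' hq₁m 1) (1/2))
    have hGoodm : MeasurableSet[m] Good := hF.inter
      (Stmt3Aux.msel_abs_le (Stmt3Aux.meas_sub_const' hf'm 1) (1/2))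
    have hμA₁ : μ (F \ A₁) ≤ ENNReal.ofReal (ε/3) := by
      have hsub : F \ A₁ ⊆ {x | 1/2 ≤
          |(∏ i ∈ Finset.range nn, (μ[u|m]) (φ^[i] x)) * f' (φ^[nn] x) - ind x|} := by
        rintro x ⟨hxF, hxA⟩
        have hind1 : ind x = 1 := Set.indicator_of_mem hxF _
        rw [Set.mem_setOf_eq, hind1]
        have : ¬(|(∏ i ∈ Finset.range nn, (μ[u|m]) (φ^[i] x)) * f' (φ^[nn] x) - 1| ≤ 1/2) :=
          fun hc => hxA ⟨hxF, hc⟩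
        linarith [not_le.mp this]
      refine le_trans (measure_mono hsub) (le_trans (Stmt3Aux.cheb hp0 hp_top
        ((Stmt3Aux.meas_sub' hq₁m hindm).mono hm le_rfl) hδ0.le one_half_pos he2) ?_)
      apply ENNReal.ofReal_le_ofReal
      have heq : δ / (1/2) = ε * ε / 12 := by rw [hδdef]; ring
      rw [heq]
      calc (ε * ε / 12) ^ p.toReal ≤ ε * ε / 12 :=
        hpow_le _ (by positivity) (by nlinarith)
      _ ≤ ε / 3 := by nlinarith
    have hμGood : μ (F \ Good) ≤ ENNReal.ofReal (ε/3) := by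
      have hsub : F \ Good ⊆ {x | 1/2 ≤ |f' x - ind x|} := by
        rintro x ⟨hxF, hxG⟩
        have hind1 : ind x = 1 := Set.indicator_of_mem hxF _
        rw [Set.mem_setOf_eq, hind1]
        have : ¬(|f' x - 1| ≤ 1/2) := fun hc => hxG ⟨hxF, hc⟩
        linarith [not_le.mp this]
      refine le_trans (measure_mono hsub) (le_trans (Stmt3Aux.cheb hp0 hp_top
        ((Stmt3Aux.meas_sub' hf'm hindm).mono hm le_rfl) hδ0.le one_half_pos he1) ?_)
      apply ENNReal.ofReal_le_ofReal
      have heq : δ / (1/2) = ε * ε / 12 := by rw [hδdef]; ring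
      rw [heq]
      calc (ε * ε / 12) ^ p.toReal ≤ ε * ε / 12 :=
        hpow_le _ (by positivity) (by nlinarith)
      _ ≤ ε / 3 := by nlinarith
    -- the (B) estimate
    have hGoodhalf : ∀ y ∈ Good, 1/2 ≤ |f' y| := by
      rintro y ⟨-, hy⟩
      rw [Set.mem_setOf_eq] at hy
      have := abs_le.mp hy
      have h1 : 1/2 ≤ f' y := by linarith [this.1]
      linarith [le_abs_self (f' y)]
    have hdisj : ∀ x, φ^[nn] x ∈ Good → x ∉ F := by
      intro x hx hxF
      exact hnotG x hxF (Or.inl hx.1)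
    have hB : ∫⁻ x in (φ^[nn]) ⁻¹' Good,
        ENNReal.ofReal (|∏ i ∈ Finset.range nn, (μ[u|m]) (φ^[i] x)| ^ p.toReal) ∂μ
        ≤ ENNReal.ofReal ((2*δ) ^ p.toReal) := by
      have hptw : ∀ x ∈ (φ^[nn]) ⁻¹' Good,
          ENNReal.ofReal (|∏ i ∈ Finset.range nn, (μ[u|m]) (φ^[i] x)| ^ p.toReal)
          ≤ ENNReal.ofReal ((2 * |(∏ i ∈ Finset.range nn, (μ[u|m]) (φ^[i] x)) * f' (φ^[nn] x)
              - ind x|) ^ p.toReal) := by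
        intro x hx
        have hxG : φ^[nn] x ∈ Good := hx
        have hxnF : x ∉ F := hdisj x hxG
        have hind0 : ind x = 0 := Set.indicator_of_notMem hxnF _
        have hhalf : 1/2 ≤ |f' (φ^[nn] x)| := hGoodhalf _ hxG
        apply ENNReal.ofReal_le_ofReal
        apply Real.rpow_le_rpow (abs_nonneg _) _ hp'0.le
        rw [hind0, sub_zero, abs_mul]
        nlinarith [abs_nonneg (∏ i ∈ Finset.range nn, (μ[u|m]) (φ^[i] x)),
          abs_nonneg (f' (φ^[nn] x))]
      have hmeas : MeasurableSet ((φ^[nn]) ⁻¹' Good) := (hφ.iterate nn) (hm _ hGoodm)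
      calc ∫⁻ x in (φ^[nn]) ⁻¹' Good,
          ENNReal.ofReal (|∏ i ∈ Finset.range nn, (μ[u|m]) (φ^[i] x)| ^ p.toReal) ∂μ
          ≤ ∫⁻ x in (φ^[nn]) ⁻¹' Good,
            ENNReal.ofReal ((2 * |(∏ i ∈ Finset.range nn, (μ[u|m]) (φ^[i] x)) *
              f' (φ^[nn] x) - ind x|) ^ p.toReal) ∂μ := by
            refine lintegral_mono_ae ?_
            rw [ae_restrict_iff' hmeas]
            exact ae_of_all _ hptw
        _ ≤ ∫⁻ x, ENNReal.ofReal ((2 * |(∏ i ∈ Finset.range nn, (μ[u|m]) (φ^[i] x)) *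
              f' (φ^[nn] x) - ind x|) ^ p.toReal) ∂μ := setLIntegral_le_lintegral _ _
        _ = ∫⁻ x, ENNReal.ofReal (2 ^ p.toReal) *
              ENNReal.ofReal (|(∏ i ∈ Finset.range nn, (μ[u|m]) (φ^[i] x)) *
              f' (φ^[nn] x) - ind x| ^ p.toReal) ∂μ := by
            apply lintegral_congr
            intro x
            rw [Real.mul_rpow (by norm_num) (abs_nonneg _), ENNReal.ofReal_mul (by positivity)]
        _ = ENNReal.ofReal (2 ^ p.toReal) *
              ∫⁻ x, ENNReal.ofReal (|(∏ i ∈ Finset.range nn, (μ[u|m]) (φ^[i] x)) *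
              f' (φ^[nn] x) - ind x| ^ p.toReal) ∂μ :=
            lintegral_const_mul' _ _ ENNReal.ofReal_ne_top
        _ ≤ ENNReal.ofReal (2 ^ p.toReal) * ENNReal.ofReal (δ ^ p.toReal) :=
            mul_le_mul_right (Stmt3Aux.lint_of_eLpNorm_le hp0 hp_top hδ0.le he2) _
        _ = ENNReal.ofReal ((2*δ) ^ p.toReal) := by
            rw [← ENNReal.ofReal_mul (by positivity), ← Real.mul_rpow (by norm_num) hδ0.le]
    -- the set W where the second quantity is large
    have hm'le : MeasurableSpace.comap (φ^[nn]) m ≤ m0 := by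
      rintro s ⟨A, hA, rfl⟩
      exact (hφ.iterate nn) (hm _ hA)
    have hrnm : Measurable[m] (((μ.map (φ^[nn])).trim hm).rnDeriv (μ.trim hm)) :=
      Measure.measurable_rnDeriv _ _
    have hrepSM : StronglyMeasurable[MeasurableSpace.comap (φ^[nn]) m]
        (μ[fun y => ∏ i ∈ Finset.range nn, (μ[u|m]) (φ^[i] y)|
          MeasurableSpace.comap (φ^[nn]) m]) := stronglyMeasurable_condExp
    have hrepψ : Measurable[m] (fun x =>
        (μ[fun y => ∏ i ∈ Finset.range nn, (μ[u|m]) (φ^[i] y)|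
          MeasurableSpace.comap (φ^[nn]) m]) (ψ^[nn] x)) :=
      Stmt3Aux.measurable_comp_rightInv (fun x => (hφψ.iterate nn) x) hrepSM.measurable
    have hΦm : Measurable[m] (fun x =>
        ((((μ.map (φ^[nn])).trim hm).rnDeriv (μ.trim hm)) x).toReal ^ (1 / p.toReal) *
        (μ[fun y => ∏ i ∈ Finset.range nn, (μ[u|m]) (φ^[i] y)|
          MeasurableSpace.comap (φ^[nn]) m]) (ψ^[nn] x)) :=
      Stmt3Aux.meas_phi' hrnm hrepψ _
    set W : Set X := Good ∩ {x | ε < |((((μ.map (φ^[nn])).trim hm).rnDeriv (μ.trim hm)) x).toReal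
        ^ (1 / p.toReal) *
        (μ[fun y => ∏ i ∈ Finset.range nn, (μ[u|m]) (φ^[i] y)|
          MeasurableSpace.comap (φ^[nn]) m]) (ψ^[nn] x)|} with hWdef
    have hWm : MeasurableSet[m] W :=
      hGoodm.inter (Stmt3Aux.msel_lt_abs hΦm ε)
    have hμW : μ W ≤ ENNReal.ofReal (ε/3) := by
      have hW3 : ((2*δ)/ε) ^ p.toReal ≤ ε/3 := by
        have hεfrac : (2 * δ) / ε = ε / 12 := by rw [hδdef]; field_simp; ring
        rw [hεfrac]
        calc (ε/12) ^ p.toReal ≤ ε/12 := hpow_le _ (by positivity) (by nlinarith)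
        _ ≤ ε/3 := by nlinarith
      suffices hmain : μ W ≤ ENNReal.ofReal (((2*δ)/ε) ^ p.toReal) by
        exact le_trans hmain (ENNReal.ofReal_le_ofReal hW3)
      by_cases hsf : SigmaFinite (μ.trim hm'le)
      · by_cases hPint : Integrable (fun y => ∏ i ∈ Finset.range nn, (μ[u|m]) (φ^[i] y)) μ
        · -- honest case
          haveI := hsf
          have hWm0 : MeasurableSet W := hm _ hWm
          have hGrm : Measurable[m] (fun x => ENNReal.ofReal
              (|(μ[fun y => ∏ i ∈ Finset.range nn, (μ[u|m]) (φ^[i] y)|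
                MeasurableSpace.comap (φ^[nn]) m]) (ψ^[nn] x)| ^ p.toReal)) :=
            Stmt3Aux.meas_ofReal_abs_rpow hrepψ _
          have hΦabs : ∀ x : X,
              |((((μ.map (φ^[nn])).trim hm).rnDeriv (μ.trim hm)) x).toReal ^ (1 / p.toReal) *
                (μ[fun y => ∏ i ∈ Finset.range nn, (μ[u|m]) (φ^[i] y)|
                  MeasurableSpace.comap (φ^[nn]) m]) (ψ^[nn] x)| ^ p.toReal
              = ((((μ.map (φ^[nn])).trim hm).rnDeriv (μ.trim hm)) x).toReal *
                |(μ[fun y => ∏ i ∈ Finset.range nn, (μ[u|m]) (φ^[i] y)|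
                  MeasurableSpace.comap (φ^[nn]) m]) (ψ^[nn] x)| ^ p.toReal := by
            intro x
            rw [abs_mul, abs_of_nonneg (Real.rpow_nonneg ENNReal.toReal_nonneg _)]
            rw [Real.mul_rpow (Real.rpow_nonneg ENNReal.toReal_nonneg _) (abs_nonneg _)]
            rw [← Real.rpow_mul ENNReal.toReal_nonneg, one_div,
              inv_mul_cancel₀ (ne_of_gt hp'0), Real.rpow_one]
          have hchainW : ENNReal.ofReal (ε ^ p.toReal) * μ W
              ≤ ENNReal.ofReal ((2*δ) ^ p.toReal) := by
            calc ENNReal.ofReal (ε ^ p.toReal) * μ W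
                = ∫⁻ _ in W, ENNReal.ofReal (ε ^ p.toReal) ∂μ := (setLIntegral_const _ _).symm
              _ ≤ ∫⁻ x in W,
                  ENNReal.ofReal (|((((μ.map (φ^[nn])).trim hm).rnDeriv (μ.trim hm)) x).toReal
                    ^ (1 / p.toReal) *
                    (μ[fun y => ∏ i ∈ Finset.range nn, (μ[u|m]) (φ^[i] y)|
                      MeasurableSpace.comap (φ^[nn]) m]) (ψ^[nn] x)| ^ p.toReal) ∂μ := by
                  refine lintegral_mono_ae ?_
                  rw [ae_restrict_iff' hWm0]
                  refine ae_of_all _ fun x hx => ?_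
                  have hx2 : ε < |((((μ.map (φ^[nn])).trim hm).rnDeriv (μ.trim hm)) x).toReal
                      ^ (1 / p.toReal) *
                      (μ[fun y => ∏ i ∈ Finset.range nn, (μ[u|m]) (φ^[i] y)|
                        MeasurableSpace.comap (φ^[nn]) m]) (ψ^[nn] x)| := hx.2
                  exact ENNReal.ofReal_le_ofReal
                    (Real.rpow_le_rpow hε0.le (le_of_lt hx2) hp'0.le)
              _ ≤ ∫⁻ x in W, (((μ.map (φ^[nn])).trim hm).rnDeriv (μ.trim hm)) x *
                  ENNReal.ofReal (|(μ[fun y => ∏ i ∈ Finset.range nn, (μ[u|m]) (φ^[i] y)|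
                    MeasurableSpace.comap (φ^[nn]) m]) (ψ^[nn] x)| ^ p.toReal) ∂μ := by
                  refine lintegral_mono_ae ?_
                  refine ae_of_all _ fun x => ?_
                  rw [hΦabs x, ENNReal.ofReal_mul ENNReal.toReal_nonneg]
                  exact mul_le_mul_left ENNReal.ofReal_toReal_le _
              _ ≤ ∫⁻ x in (φ^[nn]) ⁻¹' W,
                  ENNReal.ofReal (|(μ[fun y => ∏ i ∈ Finset.range nn, (μ[u|m]) (φ^[i] y)|
                    MeasurableSpace.comap (φ^[nn]) m]) (ψ^[nn] (φ^[nn] x))| ^ p.toReal) ∂μ :=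
                  Stmt3Aux.transport hm μ (hφ.iterate nn) hWm hGrm
              _ = ∫⁻ x in (φ^[nn]) ⁻¹' W,
                  ENNReal.ofReal (|(μ[fun y => ∏ i ∈ Finset.range nn, (μ[u|m]) (φ^[i] y)|
                    MeasurableSpace.comap (φ^[nn]) m]) x| ^ p.toReal) ∂μ := by
                  apply lintegral_congr
                  intro x
                  rw [(hψφ.iterate nn) x]
              _ ≤ ∫⁻ x in (φ^[nn]) ⁻¹' Good,
                  ENNReal.ofReal (|(μ[fun y => ∏ i ∈ Finset.range nn, (μ[u|m]) (φ^[i] y)|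
                    MeasurableSpace.comap (φ^[nn]) m]) x| ^ p.toReal) ∂μ := by
                  refine lintegral_mono_set ?_
                  rw [hWdef]
                  exact Set.preimage_mono Set.inter_subset_left
              _ ≤ ∫⁻ x in (φ^[nn]) ⁻¹' Good,
                  ENNReal.ofReal (|∏ i ∈ Finset.range nn, (μ[u|m]) (φ^[i] x)| ^ p.toReal) ∂μ :=
                  Stmt3Aux.lintegral_rpow_condexp_le hm'le μ hPint
                    ((hPm nn).mono hm le_rfl) ⟨Good, hGoodm, rfl⟩ hp'1
              _ ≤ ENNReal.ofReal ((2*δ) ^ p.toReal) := hB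
          have hεne : ENNReal.ofReal (ε ^ p.toReal) ≠ 0 := by
            simp only [ne_eq, ENNReal.ofReal_eq_zero, not_le]
            positivity
          calc μ W = (ENNReal.ofReal (ε ^ p.toReal))⁻¹ *
              (ENNReal.ofReal (ε ^ p.toReal) * μ W) := by
                rw [← mul_assoc, ENNReal.inv_mul_cancel hεne ENNReal.ofReal_ne_top, one_mul]
            _ ≤ (ENNReal.ofReal (ε ^ p.toReal))⁻¹ * ENNReal.ofReal ((2*δ) ^ p.toReal) :=
                mul_le_mul_right hchainW _
            _ = ENNReal.ofReal (((2*δ)/ε) ^ p.toReal) := by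
                rw [← ENNReal.ofReal_inv_of_pos (by positivity),
                  ← ENNReal.ofReal_mul (by positivity)]
                congr 1
                rw [Real.div_rpow (by positivity) hε0.le]
                field_simp
        · -- product not integrable : the conditional expectation is the zero function
          have hrep0 : (μ[fun y => ∏ i ∈ Finset.range nn, (μ[u|m]) (φ^[i] y)|
              MeasurableSpace.comap (φ^[nn]) m]) = 0 := condExp_of_not_integrable hPint
          have hWempty : W = ∅ := by
            rw [hWdef]
            ext x
            simp only [Set.mem_inter_iff, Set.mem_setOf_eq, Set.mem_empty_iff_false, iff_false,
              not_and]
            intro _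
            rw [hrep0]
            simp only [Pi.zero_apply, mul_zero, abs_zero]
            exact not_lt.mpr hε0.le
          rw [hWempty, measure_empty]
          exact zero_le
      · -- trim not sigma-finite : the conditional expectation is the zero function
        have hrep0 : (μ[fun y => ∏ i ∈ Finset.range nn, (μ[u|m]) (φ^[i] y)|
            MeasurableSpace.comap (φ^[nn]) m]) = 0 := condExp_of_not_sigmaFinite hm'le hsf
        have hWempty : W = ∅ := by
          rw [hWdef]
          ext x
          simp only [Set.mem_inter_iff, Set.mem_setOf_eq, Set.mem_empty_iff_false, iff_false,
            not_and]
          intro _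
          rw [hrep0]
          simp only [Pi.zero_apply, mul_zero, abs_zero]
          exact not_lt.mpr hε0.le
        rw [hWempty, measure_empty]
        exact zero_le
    -- the final set V
    refine ⟨nn, lt_of_le_of_lt (le_max_left b N) hbnn,
      (A₁ ∩ Good) \ {x | ε < |((((μ.map (φ^[nn])).trim hm).rnDeriv (μ.trim hm)) x).toReal
        ^ (1 / p.toReal) *
        (μ[fun y => ∏ i ∈ Finset.range nn, (μ[u|m]) (φ^[i] y)|
          MeasurableSpace.comap (φ^[nn]) m]) (ψ^[nn] x)|}, ?_, ?_, ?_, ?_, ?_⟩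
    · exact ((hA₁m.inter hGoodm).diff (Stmt3Aux.msel_lt_abs hΦm ε))
    · intro x hx
      exact hx.1.1.1
    · -- measure of F \ V
      have hsub : F \ ((A₁ ∩ Good) \ {x |
          ε < |((((μ.map (φ^[nn])).trim hm).rnDeriv (μ.trim hm)) x).toReal ^ (1 / p.toReal) *
          (μ[fun y => ∏ i ∈ Finset.range nn, (μ[u|m]) (φ^[i] y)|
            MeasurableSpace.comap (φ^[nn]) m]) (ψ^[nn] x)|})
          ⊆ (F \ A₁) ∪ ((F \ Good) ∪ W) := by
        rintro x ⟨hxF, hxV⟩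
        by_cases hA : x ∈ A₁
        · by_cases hG : x ∈ Good
          · right; right
            refine ⟨hG, ?_⟩
            by_contra hno
            exact hxV ⟨⟨hA, hG⟩, hno⟩
          · right; left; exact ⟨hxF, hG⟩
        · left; exact ⟨hxF, hA⟩
      calc μ _ ≤ μ ((F \ A₁) ∪ ((F \ Good) ∪ W)) := measure_mono hsub
      _ ≤ μ (F \ A₁) + μ ((F \ Good) ∪ W) := measure_union_le _ _
      _ ≤ μ (F \ A₁) + (μ (F \ Good) + μ W) :=
          add_le_add_right (measure_union_le _ _) _
      _ ≤ ENNReal.ofReal (ε/3) + (ENNReal.ofReal (ε/3) + ENNReal.ofReal (ε/3)) := by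
          exact add_le_add hμA₁ (add_le_add hμGood hμW)
      _ = ENNReal.ofReal ε := by
          rw [← ENNReal.ofReal_add (by positivity) (by positivity),
            ← ENNReal.ofReal_add (by positivity) (by positivity)]
          congr 1
          ring
    · -- first eLpNorm bound
      rw [eLpNorm_exponent_top]
      refine le_trans (eLpNormEssSup_le_of_ae_bound (C := ε) ?_) (by simp)
      rw [ae_restrict_iff' (hm _ ((hA₁m.inter hGoodm).diff
        (Stmt3Aux.msel_lt_abs hΦm ε)))]
      refine ae_of_all _ fun x hx => ?_
      obtain ⟨⟨hxA₁, hxGood⟩, -⟩ := hx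
      obtain ⟨hxF, hxval⟩ := hxA₁
      rw [Set.mem_setOf_eq] at hxval
      have hφnx := hnotG x hxF
      have hnotF : φ^[nn] x ∉ F := fun h => hφnx (Or.inl h)
      have hnotBad : φ^[nn] x ∉ Bad := fun h => hφnx (Or.inr h)
      have hind0 : ind (φ^[nn] x) = 0 := Set.indicator_of_notMem hnotF _
      have hf'small : |f' (φ^[nn] x)| ≤ ε/2 := by
        have : ¬(ε/2 < |f' (φ^[nn] x) - ind (φ^[nn] x)|) := hnotBad
        rw [hind0, sub_zero] at this
        linarith [not_lt.mp this]
      have hq₁big : 1/2 ≤ |(∏ i ∈ Finset.range nn, (μ[u|m]) (φ^[i] x)) * f' (φ^[nn] x)| := by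
        have h1 := abs_le.mp hxval
        have h2 : 1/2 ≤ (∏ i ∈ Finset.range nn, (μ[u|m]) (φ^[i] x)) * f' (φ^[nn] x) := by
          linarith [h1.1]
        linarith [le_abs_self ((∏ i ∈ Finset.range nn, (μ[u|m]) (φ^[i] x)) * f' (φ^[nn] x))]
      rw [abs_mul] at hq₁big
      have hPbig : 1/ε ≤ |∏ i ∈ Finset.range nn, (μ[u|m]) (φ^[i] x)| := by
        by_contra hc
        push_neg at hc
        have h4 : |∏ i ∈ Finset.range nn, (μ[u|m]) (φ^[i] x)| * |f' (φ^[nn] x)| ≤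
            |∏ i ∈ Finset.range nn, (μ[u|m]) (φ^[i] x)| * (ε/2) :=
          mul_le_mul_of_nonneg_left hf'small (abs_nonneg _)
        have h5 : |∏ i ∈ Finset.range nn, (μ[u|m]) (φ^[i] x)| * (ε/2) < (1/ε) * (ε/2) :=
          mul_lt_mul_of_pos_right hc (by positivity)
        have h6 : (1/ε) * (ε/2) = 1/2 := by field_simp
        linarith
      rw [Real.norm_eq_abs, abs_inv]
      have h7 : |∏ i ∈ Finset.range nn, (μ[u|m]) (φ^[i] x)|⁻¹ ≤ (1/ε)⁻¹ :=
        inv_anti₀ (by positivity) hPbig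
      rw [one_div, inv_inv] at h7
      exact h7
    · -- second eLpNorm bound
      rw [eLpNorm_exponent_top]
      refine le_trans (eLpNormEssSup_le_of_ae_bound (C := ε) ?_) (by simp)
      rw [ae_restrict_iff' (hm _ ((hA₁m.inter hGoodm).diff
        (Stmt3Aux.msel_lt_abs hΦm ε)))]
      refine ae_of_all _ fun x hx => ?_
      have hxno := hx.2
      rw [Set.mem_setOf_eq] at hxno
      push_neg at hxno
      rw [Real.norm_eq_abs]
      exact hxno
  · -- trivial branch : u not integrable, so μ[u|m] = 0
    intro ε hε0 hε1 b
    have hw0 : μ[u|m] = 0 := condExp_of_not_integrable hu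
    refine ⟨b+1, Nat.lt_succ_self b, F, hF, subset_rfl, ?_, ?_, ?_⟩
    · rw [Set.diff_self]
      simp
    · have hfn : (fun x => (∏ i ∈ Finset.range (b+1), (μ[u|m]) (φ^[i] x))⁻¹)
          = fun _ : X => (0:ℝ) := by
        funext x
        rw [hw0]
        rw [Finset.prod_eq_zero (Finset.mem_range.mpr (Nat.succ_pos b)) rfl]
        exact inv_zero
      rw [hfn, eLpNorm_zero']
      exact zero_le
    · have hfn0 : (fun y => ∏ i ∈ Finset.range (b+1), (μ[u|m]) (φ^[i] y)) = (0 : X → ℝ) := by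
        funext y
        rw [hw0]
        exact Finset.prod_eq_zero (Finset.mem_range.mpr (Nat.succ_pos b)) rfl
      rw [hfn0, condExp_zero]
      have : (fun x => ((((μ.map (φ^[b+1])).trim hm).rnDeriv (μ.trim hm)) x).toReal
          ^ (1 / p.toReal) * (0 : X → ℝ) (ψ^[b+1] x)) = fun _ : X => (0:ℝ) := by
        funext x
        simp
      rw [this, eLpNorm_zero']
      exact zero_le

end
end

section
/- Let T be a bounded operator on a Banach space X and M a closed subspace with T^n(M) ⊆ M for all n. If T ⊕ T is subspace-hypercyclic with respect to M ⊕ M, then T satisfies the subspace-hypercyclicity criterion with respect to M: there exist dense subsets D₁, D₂ of M and an increasing sequence of positive integers (n_k) such that T^{n_k}x → 0 for all x ∈ D₁; for each y ∈ D₂ there is a sequence (x_k) in M with x_k → 0 and T^{n_k}x_k → y; and T^{n_k}(M) ⊆ M for all k. (One may take D₁ = D₂ = orb(T ⊕ T, f ⊕ g) projected appropriately, where f ⊕ g is a subspace-hypercyclic vector.) -/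
open Filter Set Topology

noncomputable section

/-- `T` satisfies the *subspace-hypercyclicity criterion* with respect to `M`:
there are dense subsets `D₁, D₂` of `M` and an increasing sequence `(n_k)` of positive
integers such that `T^{n_k} x → 0` on `D₁`, every `y ∈ D₂` is approximated by
`T^{n_k} x_k` with `x_k → 0` in `M`, and `M` is invariant under every `T^{n_k}`. -/
def SubspaceHCCriterion {E : Type*} [TopologicalSpace E] [Zero E] (T : E → E) (M : Set E) :
    Prop :=
  ∃ (D₁ D₂ : Set E) (n : ℕ → ℕ),
    D₁ ⊆ M ∧ D₂ ⊆ M ∧ M ⊆ closure D₁ ∧ M ⊆ closure D₂ ∧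
    StrictMono n ∧ (∀ k, 0 < n k) ∧
    (∀ x ∈ D₁, Tendsto (fun k => T^[n k] x) atTop (𝓝 0)) ∧
    (∀ y ∈ D₂, ∃ xs : ℕ → E, (∀ k, xs k ∈ M) ∧ Tendsto xs atTop (𝓝 0) ∧
      Tendsto (fun k => T^[n k] (xs k)) atTop (𝓝 y)) ∧
    (∀ k, Set.MapsTo (T^[n k]) M M)

section AuxStmt7

variable {E : Type*} [NormedAddCommGroup E] [NormedSpace ℝ E]

private lemma iter_eq (T : E →L[ℝ] E) (j : ℕ) (x : E) : (⇑T)^[j] x = (T ^ j) x :=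
  (congrFun (FunLike.coe_pow_eq_iterate T j) x).symm

private lemma iter_comm (T : E →L[ℝ] E) (m n : ℕ) (x : E) :
    (⇑T)^[n] ((⇑T)^[m] x) = (⇑T)^[m] ((⇑T)^[n] x) := by
  rw [← Function.iterate_add_apply, ← Function.iterate_add_apply, Nat.add_comm]

private lemma auxA (T : E →L[ℝ] E) (M : Submodule ℝ E) (f g x₀ : E)
    (hx₀M : x₀ ∈ M) (hx₀ : x₀ ≠ 0)
    (hdens : ∀ u ∈ M, ∀ v ∈ M, ∀ ε > (0:ℝ), ∃ n : ℕ,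
      ‖(⇑T)^[n] f - u‖ < ε ∧ ‖(⇑T)^[n] g - v‖ < ε) :
    ∀ u ∈ M, ∀ v ∈ M, ∀ N : ℕ, ∀ ε > (0:ℝ), ∃ n : ℕ, N ≤ n ∧
      ‖(⇑T)^[n] f - u‖ < ε ∧ ‖(⇑T)^[n] g - v‖ < ε := by
  intro u hu v hv N ε hε
  by_contra hcon
  have hx : (0:ℝ) < ‖x₀‖ := norm_pos_iff.mpr hx₀
  set β : ℝ := ε / (2*(‖x₀‖+1)) with hβdef
  have hβ : 0 < β := by positivity
  have hβx : β * ‖x₀‖ < ε/2 := by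
    rw [hβdef, div_mul_eq_mul_div, div_lt_div_iff₀ (by positivity) two_pos]
    nlinarith
  have hρ : ∀ i : ℕ, (0:ℝ) < min (ε/2) (β*‖x₀‖ / 2^(i+3)) :=
    fun i => lt_min (by positivity) (by positivity)
  have hpt : ∀ i : ℕ, ∃ n : ℕ,
      ‖(⇑T)^[n] f - (u + (β/2^i) • x₀)‖ < min (ε/2) (β*‖x₀‖/2^(i+3)) ∧
      ‖(⇑T)^[n] g - v‖ < min (ε/2) (β*‖x₀‖/2^(i+3)) :=
    fun i => hdens _ (M.add_mem hu (M.smul_mem _ hx₀M)) v hv _ (hρ i)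
  choose nn h1 h2 using hpt
  have hlt : ∀ i, nn i < N := by
    intro i
    by_contra hge
    push_neg at hge
    refine hcon ⟨nn i, hge, ?_, ?_⟩
    · have e : (⇑T)^[nn i] f - u = ((⇑T)^[nn i] f - (u + (β/2^i)•x₀)) + (β/2^i)•x₀ := by abel
      have hsm : ‖(β/2^i)•x₀‖ < ε/2 := by
        rw [norm_smul, Real.norm_eq_abs, abs_of_pos (by positivity)]
        have h2i : (1:ℝ) ≤ 2^i := one_le_pow₀ (by norm_num)
        have : β/2^i * ‖x₀‖ ≤ β * ‖x₀‖ :=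
          mul_le_mul_of_nonneg_right (div_le_self hβ.le h2i) (norm_nonneg _)
        linarith
      calc ‖(⇑T)^[nn i] f - u‖
          ≤ ‖(⇑T)^[nn i] f - (u + (β/2^i)•x₀)‖ + ‖(β/2^i)•x₀‖ := by rw [e]; exact norm_add_le _ _
        _ < ε/2 + ε/2 := by
            have := lt_of_lt_of_le (h1 i) (min_le_left _ _)
            linarith
        _ = ε := by ring
    · have := lt_of_lt_of_le (h2 i) (min_le_left _ _)
      linarith
  have keylt : ∀ i j : ℕ, i < j → nn i ≠ nn j := by
    intro i j hij hEq
    have hji : i + 1 ≤ j := hij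
    -- lower bound on distance between markers
    have e : (u + (β/2^i)•x₀) - (u + (β/2^j)•x₀) = ((β/2^i) - (β/2^j)) • x₀ := by
      rw [sub_smul]; abel
    have h2 : (2:ℝ)^(i+1) ≤ 2^j := pow_le_pow_right₀ (by norm_num) hji
    have hsub : β/2^(i+1) ≤ β/2^i - β/2^j := by
      have hj : β/2^j ≤ β/2^(i+1) := by gcongr
      have e2 : β/2^i - β/2^(i+1) = β/2^(i+1) := by
        rw [pow_succ]
        field_simp
        ring
      linarith
    have hpos' : (0:ℝ) < β/2^(i+1) := by positivity
    have hdij : β*‖x₀‖/2^(i+1) ≤ ‖(u + (β/2^i)•x₀) - (u + (β/2^j)•x₀)‖ := by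
      rw [e, norm_smul, Real.norm_eq_abs, abs_of_nonneg (by linarith)]
      calc β*‖x₀‖/2^(i+1) = (β/2^(i+1))*‖x₀‖ := by ring
        _ ≤ (β/2^i - β/2^j) * ‖x₀‖ := mul_le_mul_of_nonneg_right hsub (norm_nonneg _)
    -- upper bound via common orbit point
    have t1 : ‖(u + (β/2^i)•x₀) - (⇑T)^[nn i] f‖ < β*‖x₀‖/2^(i+3) := by
      rw [norm_sub_rev]
      exact lt_of_lt_of_le (h1 i) (min_le_right _ _)
    have t2 : ‖(⇑T)^[nn i] f - (u + (β/2^j)•x₀)‖ < β*‖x₀‖/2^(j+3) := by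
      rw [hEq]
      exact lt_of_lt_of_le (h1 j) (min_le_right _ _)
    have tri : ‖(u + (β/2^i)•x₀) - (u + (β/2^j)•x₀)‖
        ≤ ‖(u + (β/2^i)•x₀) - (⇑T)^[nn i] f‖ + ‖(⇑T)^[nn i] f - (u + (β/2^j)•x₀)‖ := by
      simpa [dist_eq_norm] using dist_triangle (u + (β/2^i)•x₀) ((⇑T)^[nn i] f) (u + (β/2^j)•x₀)
    have c1 : β*‖x₀‖/2^(j+3) ≤ β*‖x₀‖/2^(i+3) := by
      gcongr
      · norm_num

    have c2 : β*‖x₀‖/2^(i+3) + β*‖x₀‖/2^(i+3) = β*‖x₀‖/2^(i+2) := by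
      rw [show i+3 = (i+2)+1 from rfl, pow_succ]
      field_simp
      ring
    have c3 : β*‖x₀‖/2^(i+2) < β*‖x₀‖/2^(i+1) := by
      have hp : (0:ℝ) < 2^(i+1) := by positivity
      have hq : (2:ℝ)^(i+1) < 2^(i+2) := by
        have := pow_lt_pow_right₀ (by norm_num : (1:ℝ) < 2) (by omega : i+1 < i+2)
        exact this
      exact div_lt_div_of_pos_left (by positivity) hp hq
    linarith
  have hinj : Function.Injective nn := by
    intro i j hEq
    rcases lt_trichotomy i j with h|h|h
    · exact absurd hEq (keylt i j h)
    · exact h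
    · exact absurd hEq.symm (keylt j i h)
  haveI : Finite ℕ := Finite.of_injective (fun i => (⟨nn i, hlt i⟩ : Fin N))
    (fun i j h => hinj (by simpa using congrArg Fin.val h))
  exact not_finite ℕ

private lemma auxB (T : E →L[ℝ] E) (M : Submodule ℝ E)
    (hTM : ∀ (n : ℕ), ∀ x ∈ M, (T ^ n) x ∈ M)
    (f g : E) (hf : f ∈ M) (hg : g ∈ M)
    (lemA : ∀ u ∈ M, ∀ v ∈ M, ∀ N : ℕ, ∀ ε > (0:ℝ), ∃ n : ℕ, N ≤ n ∧
      ‖(⇑T)^[n] f - u‖ < ε ∧ ‖(⇑T)^[n] g - v‖ < ε) :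
    SubspaceHCCriterion (⇑T) (M : Set E) := by
  have key : ∀ k N : ℕ, ∃ (n : ℕ) (w : E), N < n ∧ w ∈ M ∧
      ‖(⇑T)^[n] f‖ < 1/((k:ℝ)+1) ∧ ‖w‖ < 1/((k:ℝ)+1) ∧
      ‖(⇑T)^[n] w - f‖ < 1/((k:ℝ)+1) := by
    intro k N
    set δ : ℝ := 1/((k:ℝ)+1) with hδ
    have hδpos : 0 < δ := by positivity
    obtain ⟨m, -, hm1, hm2⟩ := lemA f hf 0 M.zero_mem 0 (δ/2) (by positivity)
    set K := ‖T ^ m‖ with hK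
    have hK0 : 0 ≤ K := norm_nonneg _
    obtain ⟨n, hnN, hn1, hn2⟩ := lemA 0 M.zero_mem f hf (N+1) (min δ (δ/(2*(K+1))))
      (lt_min hδpos (by positivity))
    rw [sub_zero] at hn1
    rw [sub_zero] at hm2
    refine ⟨n, (⇑T)^[m] g, Nat.lt_of_lt_of_le (Nat.lt_succ_self N) hnN, ?_, ?_, ?_, ?_⟩
    · rw [iter_eq]; exact hTM m g hg
    · exact lt_of_lt_of_le hn1 (min_le_left _ _)
    · exact lt_of_lt_of_le hm2 (by linarith [min_le_left δ (δ/(2*(K+1)))] )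
    · have e : (⇑T)^[n] ((⇑T)^[m] g) = (⇑T)^[m] ((⇑T)^[n] g) := iter_comm T m n g
      rw [e]
      have tri : ‖(⇑T)^[m] ((⇑T)^[n] g) - f‖
          ≤ ‖(⇑T)^[m] ((⇑T)^[n] g) - (⇑T)^[m] f‖ + ‖(⇑T)^[m] f - f‖ := by
        simpa [dist_eq_norm] using dist_triangle ((⇑T)^[m] ((⇑T)^[n] g)) ((⇑T)^[m] f) f
      have hb1 : ‖(⇑T)^[m] ((⇑T)^[n] g) - (⇑T)^[m] f‖ ≤ K * ‖(⇑T)^[n] g - f‖ := by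
        rw [iter_eq T m ((⇑T)^[n] g), iter_eq T m f, ← map_sub]
        exact (T ^ m).le_opNorm _
      have hb2 : ‖(⇑T)^[n] g - f‖ ≤ δ/(2*(K+1)) := (hn2.le).trans (min_le_right _ _)
      have hb3 : K * ‖(⇑T)^[n] g - f‖ ≤ K * (δ/(2*(K+1))) :=
        mul_le_mul_of_nonneg_left hb2 hK0
      have hb4 : K * (δ/(2*(K+1))) ≤ δ/2 := by
        rw [← mul_div_assoc, div_le_div_iff₀ (by positivity) (by norm_num : (0:ℝ) < 2)]
        nlinarith [hδpos, hK0]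
      linarith
  choose Φn Φw hΦ1 hΦ2 hΦ3 hΦ4 hΦ5 using key
  let nseq : ℕ → ℕ := fun k => Nat.rec (Φn 0 0) (fun j ih => Φn (j+1) ih) k
  let wseq : ℕ → E := fun k => Nat.casesOn k (Φw 0 0) (fun j => Φw (j+1) (nseq j))
  have hmono : StrictMono nseq := strictMono_nat_of_lt_succ (fun k => hΦ1 (k+1) (nseq k))
  have hpos : ∀ k, 0 < nseq k := fun k =>
    lt_of_lt_of_le (hΦ1 0 0) (hmono.monotone (Nat.zero_le k))
  have hP : ∀ k, wseq k ∈ M ∧ ‖(⇑T)^[nseq k] f‖ < 1/((k:ℝ)+1) ∧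
      ‖wseq k‖ < 1/((k:ℝ)+1) ∧ ‖(⇑T)^[nseq k] (wseq k) - f‖ < 1/((k:ℝ)+1) := by
    intro k
    cases k with
    | zero => exact ⟨hΦ2 0 0, hΦ3 0 0, hΦ4 0 0, hΦ5 0 0⟩
    | succ j => exact ⟨hΦ2 (j+1) (nseq j), hΦ3 (j+1) (nseq j), hΦ4 (j+1) (nseq j),
        hΦ5 (j+1) (nseq j)⟩
  set D : Set E := Set.range (fun m : ℕ => (⇑T)^[m] f) with hD
  have hDsub : D ⊆ (M : Set E) := by
    rintro x ⟨m, rfl⟩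
    show (⇑T)^[m] f ∈ (M : Set E)
    rw [iter_eq]
    exact hTM m f hf
  have hDdense : (M : Set E) ⊆ closure D := by
    intro x hx
    rw [Metric.mem_closure_iff]
    intro ε hε
    obtain ⟨n, -, h1, -⟩ := lemA x hx 0 M.zero_mem 0 ε hε
    exact ⟨(⇑T)^[n] f, ⟨n, rfl⟩, by rw [dist_eq_norm, norm_sub_rev]; exact h1⟩
  have hlim : Tendsto (fun k : ℕ => 1/((k:ℝ)+1)) atTop (𝓝 0) :=
    tendsto_one_div_add_atTop_nhds_zero_nat
  have hlim2 : ∀ m : ℕ, Tendsto (fun k : ℕ => ‖T ^ m‖ * (1/((k:ℝ)+1))) atTop (𝓝 0) := by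
    intro m
    simpa using hlim.const_mul ‖T ^ m‖
  refine ⟨D, D, nseq, hDsub, hDsub, hDdense, hDdense, hmono, hpos, ?_, ?_, ?_⟩
  · rintro x ⟨m, rfl⟩
    show Tendsto (fun k => (⇑T)^[nseq k] ((⇑T)^[m] f)) atTop (𝓝 0)
    refine squeeze_zero_norm (fun k => ?_) (hlim2 m)
    rw [iter_comm T m (nseq k) f, iter_eq T m]
    calc ‖(T ^ m) ((⇑T)^[nseq k] f)‖ ≤ ‖T ^ m‖ * ‖(⇑T)^[nseq k] f‖ := (T ^ m).le_opNorm _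
      _ ≤ ‖T ^ m‖ * (1/((k:ℝ)+1)) :=
          mul_le_mul_of_nonneg_left (hP k).2.1.le (norm_nonneg _)
  · rintro y ⟨m, rfl⟩
    show ∃ xs : ℕ → E, (∀ k, xs k ∈ (M : Set E)) ∧ Tendsto xs atTop (𝓝 0) ∧
      Tendsto (fun k => (⇑T)^[nseq k] (xs k)) atTop (𝓝 ((⇑T)^[m] f))
    refine ⟨fun k => (⇑T)^[m] (wseq k), fun k => by
      show (⇑T)^[m] (wseq k) ∈ (M : Set E)
      rw [iter_eq]; exact hTM m _ (hP k).1, ?_, ?_⟩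
    · refine squeeze_zero_norm (fun k => ?_) (hlim2 m)
      show ‖(⇑T)^[m] (wseq k)‖ ≤ _
      rw [iter_eq T m]
      calc ‖(T ^ m) (wseq k)‖ ≤ ‖T ^ m‖ * ‖wseq k‖ := (T ^ m).le_opNorm _
        _ ≤ ‖T ^ m‖ * (1/((k:ℝ)+1)) :=
            mul_le_mul_of_nonneg_left (hP k).2.2.1.le (norm_nonneg _)
    · apply tendsto_sub_nhds_zero_iff.mp
      refine squeeze_zero_norm (fun k => ?_) (hlim2 m)
      show ‖(⇑T)^[nseq k] ((⇑T)^[m] (wseq k)) - (⇑T)^[m] f‖ ≤ _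
      have e : (⇑T)^[nseq k] ((⇑T)^[m] (wseq k)) - (⇑T)^[m] f
          = (T ^ m) ((⇑T)^[nseq k] (wseq k) - f) := by
        rw [iter_comm T m (nseq k) (wseq k), iter_eq T m ((⇑T)^[nseq k] (wseq k)),
          iter_eq T m f, ← map_sub]
      rw [e]
      calc ‖(T ^ m) ((⇑T)^[nseq k] (wseq k) - f)‖
          ≤ ‖T ^ m‖ * ‖(⇑T)^[nseq k] (wseq k) - f‖ := (T ^ m).le_opNorm _
        _ ≤ ‖T ^ m‖ * (1/((k:ℝ)+1)) :=
            mul_le_mul_of_nonneg_left (hP k).2.2.2.le (norm_nonneg _)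
  · intro k x hx
    show (⇑T)^[nseq k] x ∈ (M : Set E)
    rw [iter_eq]
    exact hTM _ x hx

end AuxStmt7

/-- Let `T` be a bounded operator on a Banach space `E` and `M` a closed
subspace with `T^n(M) ⊆ M` for all `n`. If `T ⊕ T` is subspace-hypercyclic with respect to
`M ⊕ M`, then `T` satisfies the subspace-hypercyclicity criterion with respect to `M`. -/
theorem stmt7
    {E : Type*} [NormedAddCommGroup E] [NormedSpace ℝ E] [CompleteSpace E]
    (T : E →L[ℝ] E) (M : Submodule ℝ E) (hMc : IsClosed (M : Set E))
    (hTM : ∀ (n : ℕ), ∀ x ∈ M, (T ^ n) x ∈ M)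
    (hhc : SubspaceHypercyclic (Prod.map (⇑T) (⇑T)) ((M : Set E) ×ˢ (M : Set E))) :
    SubspaceHCCriterion (⇑T) (M : Set E) := by
  by_cases hM : ∀ x ∈ M, x = (0:E)
  · -- trivial subspace
    refine ⟨(M : Set E), (M : Set E), fun k => k+1, subset_rfl, subset_rfl,
      subset_closure, subset_closure, fun _ _ h => Nat.succ_lt_succ h,
      fun k => Nat.succ_pos k, ?_, ?_, ?_⟩
    · intro x hx
      have hx0 : x = 0 := hM x hx
      subst hx0
      have e : ∀ k : ℕ, (⇑T)^[k+1] (0:E) = 0 := by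
        intro k; rw [iter_eq]; exact map_zero _
      simp only [e]
      exact tendsto_const_nhds
    · intro y hy
      have hy0 : y = 0 := hM y hy
      subst hy0
      refine ⟨fun _ => 0, fun k => M.zero_mem, tendsto_const_nhds, ?_⟩
      have e : ∀ k : ℕ, (⇑T)^[k+1] (0:E) = 0 := by
        intro k; rw [iter_eq]; exact map_zero _
      simp only [e]
      exact tendsto_const_nhds
    · intro k x hx
      show (⇑T)^[k+1] x ∈ (M : Set E)
      rw [iter_eq]
      exact hTM _ x hx
  · push_neg at hM
    obtain ⟨x₀, hx₀M, hx₀⟩ := hM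
    obtain ⟨F, hF⟩ := hhc
    set f : E := F.1 with hf
    set g : E := F.2 with hg
    -- basic density extraction
    have hdens0 : ∀ u ∈ M, ∀ v ∈ M, ∀ ε > (0:ℝ), ∃ n : ℕ,
        ((⇑T)^[n] f ∈ M ∧ (⇑T)^[n] g ∈ M) ∧
        ‖(⇑T)^[n] f - u‖ < ε ∧ ‖(⇑T)^[n] g - v‖ < ε := by
      intro u hu v hv ε hε
      have h1 := hF (u, v) (Set.mk_mem_prod hu hv)
      rw [Metric.mem_closure_iff] at h1
      obtain ⟨b, ⟨⟨n, hn⟩, hbM⟩, hdist⟩ := h1 ε hε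
      have hb1 : (⇑T)^[n] f = b.1 := by
        rw [← hn]; simp [Prod.map_iterate, hf]
      have hb2 : (⇑T)^[n] g = b.2 := by
        rw [← hn]; simp [Prod.map_iterate, hg]
      rw [Prod.dist_eq] at hdist
      obtain ⟨hd1, hd2⟩ := max_lt_iff.mp hdist
      refine ⟨n, ⟨?_, ?_⟩, ?_, ?_⟩
      · rw [hb1]; exact hbM.1
      · rw [hb2]; exact hbM.2
      · rw [hb1, norm_sub_rev, ← dist_eq_norm]; exact hd1
      · rw [hb2, norm_sub_rev, ← dist_eq_norm]; exact hd2
    have hdens : ∀ u ∈ M, ∀ v ∈ M, ∀ ε > (0:ℝ), ∃ n : ℕ,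
        ‖(⇑T)^[n] f - u‖ < ε ∧ ‖(⇑T)^[n] g - v‖ < ε := by
      intro u hu v hv ε hε
      obtain ⟨n, -, h⟩ := hdens0 u hu v hv ε hε
      exact ⟨n, h⟩
    have lemA := auxA T M f g x₀ hx₀M hx₀ hdens
    -- an orbit point inside M × M
    obtain ⟨a, ⟨haf, hag⟩, -, -⟩ := hdens0 0 M.zero_mem 0 M.zero_mem 1 one_pos
    set f₁ : E := (⇑T)^[a] f with hf₁
    set g₁ : E := (⇑T)^[a] g with hg₁
    have lemA1 : ∀ u ∈ M, ∀ v ∈ M, ∀ N : ℕ, ∀ ε > (0:ℝ), ∃ n : ℕ, N ≤ n ∧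
        ‖(⇑T)^[n] f₁ - u‖ < ε ∧ ‖(⇑T)^[n] g₁ - v‖ < ε := by
      intro u hu v hv N ε hε
      obtain ⟨n, hn, h1, h2⟩ := lemA u hu v hv (N + a) ε hε
      have han : a ≤ n := le_trans (Nat.le_add_left a N) hn
      have ef : (⇑T)^[n - a] f₁ = (⇑T)^[n] f := by
        rw [hf₁, ← Function.iterate_add_apply, Nat.sub_add_cancel han]
      have eg : (⇑T)^[n - a] g₁ = (⇑T)^[n] g := by
        rw [hg₁, ← Function.iterate_add_apply, Nat.sub_add_cancel han]
      refine ⟨n - a, by omega, ?_, ?_⟩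
      · rw [ef]; exact h1
      · rw [eg]; exact h2
    exact auxB T M hTM f₁ g₁ haf hag lemA1

end
end
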